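/- arXiv:2406.12537 — 6 statements merged into one kernel-verified Lean document; each statement's English description precedes it below -/
import Mathlib

section
/- For any convex body K in ℝⁿ and any unit vectors u ≠ ±v, |w_K(u) − w_K(v)| ≤ M_K · ρ(u,v), where M_K = √(δ_K² − ω_K²), δ_K is the diameter of K and ω_K its thickness. -/
open scoped RealInnerProductSpace
open Metric Filter

/-- Width of `K` in direction `u`: distance between the two supporting
hyperplanes of `K` orthogonal to the unit vector `u`. -/
noncomputable def widthFn {n : ℕ} (K : Set (EuclideanSpace ℝ (Fin n)))
    (u : EuclideanSpace ℝ (Fin n)) : ℝ :=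
  sSup ((fun x => ⟪x, u⟫) '' K) - sInf ((fun x => ⟪x, u⟫) '' K)

/-- Diameter of `K` in direction `u`: maximal length of a chord of `K` parallel to `u`. -/
noncomputable def dirDiam {n : ℕ} (K : Set (EuclideanSpace ℝ (Fin n)))
    (u : EuclideanSpace ℝ (Fin n)) : ℝ :=
  sSup {d : ℝ | ∃ x ∈ K, ∃ y ∈ K, (∃ t : ℝ, x - y = t • u) ∧ d = dist x y}

/-- Projective spherical distance `ρ(u,v) = arccos |⟨u,v⟩|`. -/
noncomputable def rho {n : ℕ} (u v : EuclideanSpace ℝ (Fin n)) : ℝ :=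
  Real.arccos |⟪u, v⟫|

/-- `e_K(O)`: maximal length of a chord of `K` cut by a line through `O`. -/
noncomputable def eFn {n : ℕ} (K : Set (EuclideanSpace ℝ (Fin n)))
    (O : EuclideanSpace ℝ (Fin n)) : ℝ :=
  sSup {d : ℝ | ∃ x ∈ K, ∃ y ∈ K, Collinear ℝ ({O, x, y} : Set (EuclideanSpace ℝ (Fin n))) ∧
    d = dist x y}

/-- `s_K(u)`: maximal distance between a point of `K` in one supporting hyperplane
orthogonal to `u` and a point of `K` in the other. -/
noncomputable def sFn {n : ℕ} (K : Set (EuclideanSpace ℝ (Fin n)))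
    (u : EuclideanSpace ℝ (Fin n)) : ℝ :=
  sSup {d : ℝ | ∃ A ∈ K, ∃ B ∈ K,
    (∀ x ∈ K, ⟪x, u⟫ ≤ ⟪A, u⟫) ∧ (∀ x ∈ K, ⟪B, u⟫ ≤ ⟪x, u⟫) ∧ d = dist A B}

/-- `r_K(u)`: infimum over diametral chords `[AB]` for `u` and pairs of parallel
supporting hyperplanes `H₁ ∋ A`, `H₂ ∋ B` of the distance between `H₁` and `H₂`. -/
noncomputable def rFn {n : ℕ} (K : Set (EuclideanSpace ℝ (Fin n)))
    (u : EuclideanSpace ℝ (Fin n)) : ℝ :=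
  sInf {d : ℝ | ∃ A ∈ K, ∃ B ∈ K, (∃ t : ℝ, A - B = t • u) ∧ dist A B = dirDiam K u ∧
    ∃ v : EuclideanSpace ℝ (Fin n), ‖v‖ = 1 ∧
      (∀ x ∈ K, ⟪x, v⟫ ≤ ⟪A, v⟫) ∧ (∀ x ∈ K, ⟪B, v⟫ ≤ ⟪x, v⟫) ∧ d = ⟪A - B, v⟫}

/-!
Let `A, B ∈ K` realise the width in direction `u`, so that `w_K(u) = ⟪c, u⟫` for the chord
`c = A - B`, with `‖c‖ ≤ δ_K` and `|⟪c, v⟫| ≤ w_K(v)`. By the triangle inequality for angles,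
`|⟪c, v⟫| ≥ ‖c‖ cos (θ + ρ(u, v))` where `θ = ∠(c, u)`. Put `b = max ω_K |⟪c, v⟫|` and
`ψ = arccos (b / ‖c‖) ∈ [θ, θ + ρ(u, v)]`; the mean value theorem for `cos` on `[θ, ψ]` gives
`w_K(u) - w_K(v) ≤ ‖c‖ (cos θ - cos ψ) ≤ ‖c‖ sin ψ · ρ(u, v) = √(‖c‖² - b²) ρ(u, v)`,
and `√(‖c‖² - b²) ≤ √(δ_K² - ω_K²)`.
-/

open Real InnerProductGeometry

namespace Real

theorem cos_sub_cos_le_sin_mul {θ ψ : ℝ} (hθ : 0 ≤ θ) (hθψ : θ ≤ ψ) (hψ : ψ ≤ π / 2) :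
    cos θ - cos ψ ≤ sin ψ * (ψ - θ) := by
  have hderiv : ∀ t ∈ interior (Set.Icc θ ψ), deriv (fun t => -cos t) t ≤ sin ψ := by
    intro t ht
    rw [interior_Icc] at ht
    simpa using sin_le_sin_of_le_of_le_pi_div_two (by linarith [ht.1, pi_pos]) hψ ht.2.le
  have := (convex_Icc θ ψ).image_sub_le_mul_sub_of_deriv_le
    continuous_cos.neg.continuousOn differentiable_cos.neg.differentiableOn hderiv
    θ ⟨le_rfl, hθψ⟩ ψ ⟨hθψ, le_rfl⟩ hθψ
  simp only [Pi.neg_apply] at this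
  linarith

theorem mul_cos_sub_le_sqrt_mul {d b θ ρ : ℝ} (hd : 0 < d) (hb : 0 ≤ b) (hθ₀ : 0 ≤ θ)
    (hθ : θ ≤ π / 2) (hρ : 0 ≤ ρ) (hbθ : b ≤ d * cos θ) (hbρ : d * cos (θ + ρ) ≤ b) :
    d * cos θ - b ≤ √(d ^ 2 - b ^ 2) * ρ := by
  set ψ := arccos (b / d)
  have hbd : b / d ≤ cos θ := by rwa [div_le_iff₀' hd]
  have hbd₁ : b / d ≤ 1 := hbd.trans (cos_le_one θ)
  have hcos : cos ψ = b / d := cos_arccos (by linarith [div_nonneg hb hd.le]) hbd₁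
  have hψ : ψ ≤ π / 2 := arccos_le_pi_div_two.2 (div_nonneg hb hd.le)
  have hθψ : θ ≤ ψ := by
    simpa [arccos_cos hθ₀ (by linarith [pi_pos])] using arccos_le_arccos hbd
  have hψρ : ψ ≤ θ + ρ := by
    rcases le_total (θ + ρ) (π / 2) with h | h
    · have : cos (θ + ρ) ≤ b / d := by rwa [le_div_iff₀' hd]
      have := arccos_le_arccos this
      rwa [arccos_cos (x := θ + ρ) (by linarith) (by linarith [pi_pos])] at this
    · linarith
  have hsin : d * sin ψ = √(d ^ 2 - b ^ 2) := by
    rw [sin_arccos, ← sqrt_sq hd.le, ← sqrt_mul (sq_nonneg d), sqrt_sq hd.le]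
    congr 1
    field_simp
  calc d * cos θ - b = d * (cos θ - cos ψ) := by rw [hcos]; field_simp
    _ ≤ d * (sin ψ * (ψ - θ)) := by gcongr; exact cos_sub_cos_le_sin_mul hθ₀ hθψ hψ
    _ ≤ d * sin ψ * ρ := by
      rw [← mul_assoc]
      gcongr
      · exact mul_nonneg hd.le (sin_nonneg_of_nonneg_of_le_pi (arccos_nonneg _) (by linarith))
      · linarith
    _ = √(d ^ 2 - b ^ 2) * ρ := by rw [hsin]

end Real

section

variable {n : ℕ}

theorem rho_comm (u v : EuclideanSpace ℝ (Fin n)) : rho u v = rho v u := by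
  rw [rho, rho, real_inner_comm]

theorem rho_neg_right (u v : EuclideanSpace ℝ (Fin n)) : rho u (-v) = rho u v := by
  simp [rho, inner_neg_right]

theorem rho_nonneg (u v : EuclideanSpace ℝ (Fin n)) : 0 ≤ rho u v := arccos_nonneg _

theorem rho_le_pi_div_two (u v : EuclideanSpace ℝ (Fin n)) : rho u v ≤ π / 2 :=
  arccos_le_pi_div_two.2 (abs_nonneg _)

theorem angle_eq_rho {u v : EuclideanSpace ℝ (Fin n)} (hu : ‖u‖ = 1) (hv : ‖v‖ = 1)
    (huv : 0 ≤ ⟪u, v⟫) : angle u v = rho u v := by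
  simp [angle, rho, hu, hv, abs_of_nonneg huv]

theorem norm_mul_cos_angle_add_rho_le_abs_inner (c : EuclideanSpace ℝ (Fin n))
    {u v : EuclideanSpace ℝ (Fin n)} (hu : ‖u‖ = 1) (hv : ‖v‖ = 1) (hcu : angle c u ≤ π / 2) :
    ‖c‖ * cos (angle c u + rho u v) ≤ |⟪c, v⟫| := by
  wlog huv : 0 ≤ ⟪u, v⟫ generalizing v
  · simpa [rho_neg_right, inner_neg_right] using
      this (v := -v) (by rwa [norm_neg]) (by rw [inner_neg_right]; linarith)
  have hcv : angle c v ≤ angle c u + rho u v := by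
    simpa [angle_eq_rho hu hv huv] using angle_le_angle_add_angle c u v
  calc ‖c‖ * cos (angle c u + rho u v) ≤ ‖c‖ * cos (angle c v) := by
        gcongr
        exact cos_le_cos_of_nonneg_of_le_pi (angle_nonneg c v)
          (by linarith [rho_le_pi_div_two u v]) hcv
    _ = ⟪c, v⟫ := by rw [← cos_angle_mul_norm_mul_norm, hv, mul_one, mul_comm]
    _ ≤ |⟪c, v⟫| := le_abs_self _

variable {K : Set (EuclideanSpace ℝ (Fin n))}

@[simp]
theorem widthFn_empty (v : EuclideanSpace ℝ (Fin n)) : widthFn ∅ v = 0 := by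
  simp [widthFn]

theorem inner_sub_le_widthFn (hK : IsCompact K) {x y : EuclideanSpace ℝ (Fin n)} (hx : x ∈ K)
    (hy : y ∈ K) (v : EuclideanSpace ℝ (Fin n)) : ⟪x - y, v⟫ ≤ widthFn K v := by
  have hKv := hK.image
    (continuous_id.inner continuous_const : Continuous fun x : EuclideanSpace ℝ (Fin n) => ⟪x, v⟫)
  rw [widthFn, inner_sub_left]
  exact sub_le_sub (le_csSup hKv.bddAbove ⟨x, hx, rfl⟩) (csInf_le hKv.bddBelow ⟨y, hy, rfl⟩)

theorem abs_inner_sub_le_widthFn (hK : IsCompact K) {x y : EuclideanSpace ℝ (Fin n)}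
    (hx : x ∈ K) (hy : y ∈ K) (v : EuclideanSpace ℝ (Fin n)) : |⟪x - y, v⟫| ≤ widthFn K v := by
  refine abs_le.2 ⟨?_, inner_sub_le_widthFn hK hx hy v⟩
  rw [neg_le, ← inner_neg_left, neg_sub]
  exact inner_sub_le_widthFn hK hy hx v

theorem widthFn_nonneg (hK : IsCompact K) (v : EuclideanSpace ℝ (Fin n)) : 0 ≤ widthFn K v := by
  rcases K.eq_empty_or_nonempty with rfl | ⟨x, hx⟩
  · simp
  · simpa using inner_sub_le_widthFn hK hx hx v

theorem exists_widthFn_eq_inner_sub (hK : IsCompact K) (hne : K.Nonempty)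
    (u : EuclideanSpace ℝ (Fin n)) : ∃ A ∈ K, ∃ B ∈ K, widthFn K u = ⟪A - B, u⟫ := by
  have hcont : ContinuousOn (fun x : EuclideanSpace ℝ (Fin n) => ⟪x, u⟫) K :=
    (continuous_id.inner continuous_const).continuousOn
  obtain ⟨A, hA, hsup⟩ := hK.exists_sSup_image_eq hne hcont
  obtain ⟨B, hB, hinf⟩ := hK.exists_sInf_image_eq hne hcont
  exact ⟨A, hA, B, hB, by rw [widthFn, hsup, hinf, inner_sub_left]⟩

theorem widthFn_sub_le (hK : IsCompact K) {u v : EuclideanSpace ℝ (Fin n)} (hu : ‖u‖ = 1)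
    (hv : ‖v‖ = 1) {ω : ℝ} (hω₀ : 0 ≤ ω) (hω : ω ≤ widthFn K v) :
    widthFn K u - widthFn K v ≤ √(diam K ^ 2 - ω ^ 2) * rho u v := by
  rcases le_or_gt (widthFn K u) (widthFn K v) with hle | hlt
  · linarith [mul_nonneg (sqrt_nonneg (diam K ^ 2 - ω ^ 2)) (rho_nonneg u v)]
  have hne : K.Nonempty := Set.nonempty_iff_ne_empty.2 (by rintro rfl; simp at hlt)
  obtain ⟨A, hA, B, hB, hwu⟩ := exists_widthFn_eq_inner_sub hK hne u
  set c := A - B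
  set b := max ω |⟪c, v⟫|
  have hcv : |⟪c, v⟫| ≤ widthFn K v := abs_inner_sub_le_widthFn hK hA hB v
  have hcu : 0 < ⟪c, u⟫ := hwu ▸ (widthFn_nonneg hK v).trans_lt hlt
  have hc : 0 < ‖c‖ := norm_pos_iff.2 (by rintro h; simp [h] at hcu)
  have hcos : ‖c‖ * cos (angle c u) = ⟪c, u⟫ := by
    rw [← cos_angle_mul_norm_mul_norm, hu, mul_one, mul_comm]
  have hθ : angle c u ≤ π / 2 := by
    rw [angle, arccos_le_pi_div_two]; positivity
  have hbv : b ≤ widthFn K v := max_le hω hcv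
  have hbu : b ≤ ‖c‖ * cos (angle c u) := hcos ▸ hwu ▸ hbv.trans hlt.le
  have hdiam : ‖c‖ ≤ diam K := by
    simpa [dist_eq_norm] using dist_le_diam_of_mem hK.isBounded hA hB
  calc widthFn K u - widthFn K v ≤ ‖c‖ * cos (angle c u) - b := by linarith
    _ ≤ √(‖c‖ ^ 2 - b ^ 2) * rho u v :=
      mul_cos_sub_le_sqrt_mul hc (le_max_of_le_left hω₀) (angle_nonneg c u) hθ (rho_nonneg u v)
        hbu ((norm_mul_cos_angle_add_rho_le_abs_inner c hu hv hθ).trans (le_max_right _ _))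
    _ ≤ √(diam K ^ 2 - ω ^ 2) * rho u v := by
      refine mul_le_mul_of_nonneg_right (sqrt_le_sqrt ?_) (rho_nonneg u v)
      have : ω ≤ b := le_max_left _ _
      nlinarith [norm_nonneg c]

end

theorem width_lipschitz_general {n : ℕ} (K : Set (EuclideanSpace ℝ (Fin n)))
    (hKc : IsCompact K)
    (u v : EuclideanSpace ℝ (Fin n)) (hu : ‖u‖ = 1) (hv : ‖v‖ = 1) :
    |widthFn K u - widthFn K v| ≤
      Real.sqrt ((Metric.diam K) ^ 2 -
        (⨅ w : sphere (0 : EuclideanSpace ℝ (Fin n)) 1, widthFn K w) ^ 2) * rho u v := by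
  set ω := ⨅ w : sphere (0 : EuclideanSpace ℝ (Fin n)) 1, widthFn K w
  have hω₀ : 0 ≤ ω := Real.iInf_nonneg fun w => widthFn_nonneg hKc w
  have hω : ∀ w : EuclideanSpace ℝ (Fin n), ‖w‖ = 1 → ω ≤ widthFn K w := fun w hw =>
    ciInf_le ⟨0, by rintro _ ⟨w, rfl⟩; exact widthFn_nonneg hKc w⟩
      (⟨w, mem_sphere_zero_iff_norm.2 hw⟩ : sphere (0 : EuclideanSpace ℝ (Fin n)) 1)
  rw [abs_sub_le_iff]
  refine ⟨widthFn_sub_le hKc hu hv hω₀ (hω v hv), ?_⟩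
  rw [rho_comm]
  exact widthFn_sub_le hKc hv hu hω₀ (hω u hu)

theorem width_lipschitz {n : ℕ} (hn : 2 ≤ n) (K : Set (EuclideanSpace ℝ (Fin n)))
    (hKc : IsCompact K) (hKconv : Convex ℝ K) (hKint : (interior K).Nonempty)
    (u v : EuclideanSpace ℝ (Fin n)) (hu : ‖u‖ = 1) (hv : ‖v‖ = 1)
    (huv : u ≠ v) (huv' : u ≠ -v) :
    |widthFn K u - widthFn K v| ≤
      Real.sqrt ((Metric.diam K) ^ 2 -
        (⨅ w : sphere (0 : EuclideanSpace ℝ (Fin n)) 1, widthFn K w) ^ 2) * rho u v :=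
  width_lipschitz_general K hKc u v hu hv
end

section
/- For any convex body K in ℝⁿ and any unit vectors u ≠ ±v, |d_K(u) − d_K(v)| ≤ N_K · ρ(u,v), where N_K = (δ_K/ω_K)·√(δ_K² − ω_K²). -/
open scoped RealInnerProductSpace
open Metric Filter

namespace DirDiamProof

variable {n : ℕ}

local notation "E" => EuclideanSpace ℝ (Fin n)

lemma chord_bddAbove (K : Set E) (hb : Bornology.IsBounded K) (u : E) :
    BddAbove {d : ℝ | ∃ x ∈ K, ∃ y ∈ K, (∃ t : ℝ, x - y = t • u) ∧ d = dist x y} := by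
  refine ⟨Metric.diam K, ?_⟩
  rintro d ⟨x, hx, y, hy, -, rfl⟩
  exact Metric.dist_le_diam_of_mem hb hx hy

lemma chord_zero_mem {K : Set E} (hne : K.Nonempty) (u : E) :
    (0:ℝ) ∈ {d : ℝ | ∃ x ∈ K, ∃ y ∈ K, (∃ t : ℝ, x - y = t • u) ∧ d = dist x y} := by
  obtain ⟨x, hx⟩ := hne
  exact ⟨x, hx, x, hx, ⟨0, by simp⟩, by simp⟩

lemma dist_le_dirDiam {K : Set E} (hb : Bornology.IsBounded K) {u x y : E}
    (hx : x ∈ K) (hy : y ∈ K) (h : ∃ t : ℝ, x - y = t • u) : dist x y ≤ dirDiam K u :=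
  le_csSup (chord_bddAbove K hb u) ⟨x, hx, y, hy, h, rfl⟩

lemma dirDiam_nonneg {K : Set E} (hb : Bornology.IsBounded K) (hne : K.Nonempty) (u : E) :
    0 ≤ dirDiam K u :=
  le_csSup (chord_bddAbove K hb u) (chord_zero_mem hne u)

lemma dirDiam_le_diam {K : Set E} (hb : Bornology.IsBounded K) (hne : K.Nonempty) (u : E) :
    dirDiam K u ≤ Metric.diam K := by
  apply csSup_le ⟨0, chord_zero_mem hne u⟩
  rintro d ⟨x, hx, y, hy, -, rfl⟩
  exact Metric.dist_le_diam_of_mem hb hx hy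

lemma eps_le_dirDiam {K : Set E} (hb : Bornology.IsBounded K) {c : E} {ε : ℝ}
    (hε : 0 < ε) (hball : Metric.ball c ε ⊆ K) {w : E} (hw : ‖w‖ = 1) :
    ε / 2 ≤ dirDiam K w := by
  have hx : c + (ε/4) • w ∈ K := by
    apply hball
    rw [Metric.mem_ball, dist_eq_norm, add_sub_cancel_left, norm_smul, hw, mul_one,
      Real.norm_eq_abs, abs_of_pos (by linarith)]
    linarith
  have hy : c - (ε/4) • w ∈ K := by
    apply hball
    rw [Metric.mem_ball, dist_eq_norm, sub_sub_cancel_left, norm_neg, norm_smul, hw, mul_one,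
      Real.norm_eq_abs, abs_of_pos (by linarith)]
    linarith
  have hchord : (c + (ε/4) • w) - (c - (ε/4) • w) = (ε/2) • w := by module
  have := dist_le_dirDiam hb hx hy ⟨ε/2, hchord⟩
  rwa [dist_eq_norm, hchord, norm_smul, hw, mul_one, Real.norm_eq_abs,
    abs_of_pos (by linarith)] at this


lemma exists_diametral {K : Set E} (hKc : IsCompact K) (hne : K.Nonempty) {v : E}
    (hv : ‖v‖ = 1) :
    ∃ A ∈ K, ∃ B ∈ K, A - B = dirDiam K v • v ∧ dist A B = dirDiam K v := by
  set S : Set (E × E) := (K ×ˢ K) ∩ {p | p.1 - p.2 ∈ Submodule.span ℝ {v}} with hSdef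
  have hSc : IsCompact S := by
    apply (hKc.prod hKc).inter_right
    exact (Submodule.span ℝ {v}).closed_of_finiteDimensional.preimage
      (continuous_fst.sub continuous_snd)
  have hSne : S.Nonempty := by
    obtain ⟨x, hx⟩ := hne
    exact ⟨(x, x), ⟨⟨hx, hx⟩, by simp⟩⟩
  obtain ⟨⟨A, B⟩, hABS, hmax⟩ := hSc.exists_isMaxOn hSne continuous_dist.continuousOn
  obtain ⟨⟨hA, hB⟩, hspan⟩ := hABS
  simp only [Set.mem_setOf_eq] at hspan
  obtain ⟨t, ht⟩ := Submodule.mem_span_singleton.mp hspan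
  simp only at hA hB ht
  rw [isMaxOn_iff] at hmax
  have hd : dirDiam K v = dist A B := by
    apply le_antisymm
    · apply csSup_le ⟨0, chord_zero_mem hne v⟩
      rintro d ⟨x, hx, y, hy, ⟨s, hs⟩, rfl⟩
      exact hmax (x, y) ⟨⟨hx, hy⟩, Submodule.mem_span_singleton.mpr ⟨s, hs.symm⟩⟩
    · exact dist_le_dirDiam hKc.isBounded hA hB ⟨t, ht.symm⟩
  have hdist : dist A B = |t| := by
    rw [dist_eq_norm, ← ht, norm_smul, hv, Real.norm_eq_abs, mul_one]
  rcases le_or_gt 0 t with h0 | h0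
  · exact ⟨A, hA, B, hB, by rw [hd, hdist, abs_of_nonneg h0, ← ht], hd.symm⟩
  · refine ⟨B, hB, A, hA, ?_, by rw [dist_comm]; exact hd.symm⟩
    have hBA : B - A = (-t) • v := by rw [neg_smul, ht]; module
    rw [hBA, hd, hdist, abs_of_neg h0]

lemma subset_closure_interior {K : Set E} (hKconv : Convex ℝ K)
    (hKint : (interior K).Nonempty) : K ⊆ closure (interior K) := by
  obtain ⟨y, hy⟩ := hKint
  intro x hx
  have htend : Tendsto (fun t : ℝ => (1 - t) • x + t • y) (nhdsWithin 0 (Set.Ioi 0)) (nhds x) := by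
    have hc : Continuous (fun t : ℝ => (1 - t) • x + t • y) := by continuity
    have := hc.tendsto 0
    simp only [sub_zero, one_smul, zero_smul, add_zero] at this
    exact this.mono_left nhdsWithin_le_nhds
  apply mem_closure_of_tendsto htend
  filter_upwards [Ioo_mem_nhdsGT_of_mem (Set.mem_Ico.mpr ⟨le_refl 0, one_pos⟩)] with t ht
  exact hKconv.combo_closure_interior_mem_interior (subset_closure hx) hy
    (by linarith [ht.2]) ht.1 (by ring)


lemma exists_support {K : Set E} (hKc : IsCompact K) (hKconv : Convex ℝ K)
    (hKint : (interior K).Nonempty) {v : E} (hv : ‖v‖ = 1) (hd : 0 < dirDiam K v) :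
    ∃ A ∈ K, ∃ B ∈ K, ∃ w : E, ‖w‖ = 1 ∧ A - B = dirDiam K v • v ∧
      (∀ x ∈ K, ⟪x, w⟫ ≤ ⟪A, w⟫) ∧ (∀ x ∈ K, ⟪B, w⟫ ≤ ⟪x, w⟫) := by
  have hne : K.Nonempty := hKint.mono interior_subset
  obtain ⟨A, hA, B, hB, hAB, hdist⟩ := exists_diametral hKc hne hv
  set d := dirDiam K v with hddef
  set T : Set E := (fun y => (A - B) + y) '' interior K with hTdef
  have hdisj : Disjoint (interior K) T := by
    rw [Set.disjoint_left]
    rintro x hx ⟨y, hy, rfl⟩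
    obtain ⟨ε₁, hε₁, hball₁⟩ := Metric.isOpen_iff.mp isOpen_interior _ hx
    obtain ⟨ε₂, hε₂, hball₂⟩ := Metric.isOpen_iff.mp isOpen_interior _ hy
    set ε := min ε₁ ε₂ with hεdef
    have hε : 0 < ε := lt_min hε₁ hε₂
    have hεa : ε ≤ ε₁ := min_le_left _ _
    have hεb : ε ≤ ε₂ := min_le_right _ _
    have hx' : ((A - B) + y) + (ε/2) • v ∈ K := by
      apply interior_subset; apply hball₁
      rw [Metric.mem_ball, dist_eq_norm, add_sub_cancel_left, norm_smul, hv, mul_one,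
        Real.norm_eq_abs, abs_of_pos (by linarith)]
      linarith
    have hy' : y - (ε/2) • v ∈ K := by
      apply interior_subset; apply hball₂
      rw [Metric.mem_ball, dist_eq_norm, sub_sub_cancel_left, norm_neg, norm_smul, hv, mul_one,
        Real.norm_eq_abs, abs_of_pos (by linarith)]
      linarith
    have hchord : (((A - B) + y) + (ε/2) • v) - (y - (ε/2) • v) = (d + ε) • v := by
      rw [add_smul, ← hAB]; module
    have hle := dist_le_dirDiam hKc.isBounded hx' hy' ⟨d + ε, hchord⟩
    rw [dist_eq_norm, hchord, norm_smul, hv, mul_one, Real.norm_eq_abs,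
      abs_of_pos (by linarith)] at hle
    linarith
  have hTconv : Convex ℝ T := hKconv.interior.translate (A - B)
  obtain ⟨f, c, hfs, hft⟩ :=
    geometric_hahn_banach_open hKconv.interior isOpen_interior hTconv hdisj
  have hclosure := subset_closure_interior hKconv hKint
  have hub : ∀ x ∈ K, f x ≤ c := by
    intro x hx
    have hsub : closure (interior K) ⊆ {z | f z ≤ c} :=
      closure_minimal (fun z hz => (hfs z hz).le) (isClosed_le f.continuous continuous_const)
    exact hsub (hclosure hx)
  have hlb : ∀ x ∈ K, c - f (A - B) ≤ f x := by
    intro x hx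
    have hsub : closure (interior K) ⊆ {z | c - f (A - B) ≤ f z} := by
      apply closure_minimal ?_ (isClosed_le continuous_const f.continuous)
      intro z hz
      have := hft ((A - B) + z) ⟨z, hz, rfl⟩
      simp only [map_add, Set.mem_setOf_eq] at this ⊢
      linarith
    exact hsub (hclosure hx)
  have hfD : 0 < f (A - B) := by
    obtain ⟨y, hy⟩ := hKint
    have h1 := hfs y hy
    have h2 := hft ((A - B) + y) ⟨y, hy, rfl⟩
    rw [map_add] at h2; linarith
  have hfAB : f A = f B + f (A - B) := by rw [← map_add]; congr 1; module
  have hfA : f A = c := le_antisymm (hub A hA) (by have := hlb B hB; linarith)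
  have hfB : f B = c - f (A - B) := by linarith
  -- Riesz representation
  set w₀ : E := (InnerProductSpace.toDual ℝ _).symm f with hw₀def
  have hrepr : ∀ x : E, ⟪w₀, x⟫ = f x := fun x => InnerProductSpace.toDual_symm_apply
  have hw₀ne : w₀ ≠ 0 := by
    intro h
    have := hrepr (A - B)
    rw [h, inner_zero_left] at this
    linarith
  have hpos : (0:ℝ) < ‖w₀‖⁻¹ := inv_pos.mpr (norm_pos_iff.mpr hw₀ne)
  have key : ∀ z : E, ⟪z, (‖w₀‖⁻¹ : ℝ) • w₀⟫ = ‖w₀‖⁻¹ * f z := by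
    intro z
    rw [real_inner_smul_right, real_inner_comm, hrepr]
  refine ⟨A, hA, B, hB, (‖w₀‖⁻¹ : ℝ) • w₀, norm_smul_inv_norm hw₀ne, hAB, ?_, ?_⟩
  · intro x hx
    rw [key, key]
    have hxA : f x ≤ f A := by rw [hfA]; exact hub x hx
    exact mul_le_mul_of_nonneg_left hxA hpos.le
  · intro x hx
    rw [key, key]
    have hBx : f B ≤ f x := by rw [hfB]; exact hlb x hx
    exact mul_le_mul_of_nonneg_left hBx hpos.le

lemma dirDiam_mul_le {K : Set E} (hb : Bornology.IsBounded K) (hne : K.Nonempty)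
    {w A B : E} (hA : A ∈ K) (hB : B ∈ K)
    (hup : ∀ x ∈ K, ⟪x, w⟫ ≤ ⟪A, w⟫) (hlo : ∀ x ∈ K, ⟪B, w⟫ ≤ ⟪x, w⟫)
    {u : E} (hu : ‖u‖ = 1) :
    dirDiam K u * |⟪u, w⟫| ≤ ⟪A, w⟫ - ⟪B, w⟫ := by
  rcases (abs_nonneg ⟪u, w⟫).eq_or_lt with h0 | h0
  · rw [← h0, mul_zero]
    linarith [hlo A hA]
  · rw [← le_div_iff₀ h0]
    apply csSup_le ⟨0, chord_zero_mem hne u⟩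
    rintro dd ⟨x, hx, y, hy, ⟨t, ht⟩, rfl⟩
    rw [le_div_iff₀ h0, dist_eq_norm, ht, norm_smul, hu, mul_one, Real.norm_eq_abs, ← abs_mul]
    have h1 : ⟪x - y, w⟫ = t * ⟪u, w⟫ := by rw [ht, real_inner_smul_left]
    have h2 : ⟪x - y, w⟫ = ⟪x, w⟫ - ⟪y, w⟫ := inner_sub_left x y w
    calc |t * ⟪u, w⟫| = |⟪x, w⟫ - ⟪y, w⟫| := by rw [← h1, h2]
      _ ≤ ⟪A, w⟫ - ⟪B, w⟫ := abs_le.mpr ⟨by linarith [hup y hy, hlo x hx],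
          by linarith [hup x hx, hlo y hy]⟩


lemma arccos_le_arccos {x y : ℝ} (h : x ≤ y) : Real.arccos y ≤ Real.arccos x := by
  unfold Real.arccos
  have := Real.monotone_arcsin h
  linarith

lemma norm_sub_proj {u v : E} (hu : ‖u‖ = 1) (hv : ‖v‖ = 1) :
    ‖u - ⟪u, v⟫ • v‖ = Real.sqrt (1 - ⟪u, v⟫ ^ 2) := by
  rw [← Real.sqrt_sq (norm_nonneg (u - ⟪u, v⟫ • v))]
  congr 1
  rw [← real_inner_self_eq_norm_sq]
  rw [inner_sub_left, inner_sub_right, inner_sub_right, real_inner_smul_left,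
    real_inner_smul_left, real_inner_smul_right, real_inner_smul_right,
    real_inner_self_eq_norm_sq, real_inner_self_eq_norm_sq, hu, hv,
    real_inner_comm v u]
  ring

lemma sph_triangle {u v w : E} (hu : ‖u‖ = 1) (hv : ‖v‖ = 1) (hw : ‖w‖ = 1) :
    Real.arccos ⟪u, w⟫ ≤ Real.arccos ⟪u, v⟫ + Real.arccos ⟪v, w⟫ := by
  have ha1 : |⟪u, v⟫| ≤ 1 := by
    have := abs_real_inner_le_norm u v; rw [hu, hv] at this; simpa using this
  have hb1 : |⟪v, w⟫| ≤ 1 := by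
    have := abs_real_inner_le_norm v w; rw [hv, hw] at this; simpa using this
  have hG : ⟪u, v⟫ * ⟪v, w⟫ -
      Real.sqrt (1 - ⟪u, v⟫ ^ 2) * Real.sqrt (1 - ⟪v, w⟫ ^ 2) ≤ ⟪u, w⟫ := by
    have hcs := abs_real_inner_le_norm (u - ⟪u, v⟫ • v) (w - ⟪w, v⟫ • v)
    have hinner : ⟪u - ⟪u, v⟫ • v, w - ⟪w, v⟫ • v⟫ = ⟪u, w⟫ - ⟪u, v⟫ * ⟪v, w⟫ := by
      rw [inner_sub_left, inner_sub_right, inner_sub_right, real_inner_smul_left,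
        real_inner_smul_left, real_inner_smul_right, real_inner_smul_right,
        real_inner_self_eq_norm_sq, hv, real_inner_comm w v]
      ring
    have hn1 : ‖u - ⟪u, v⟫ • v‖ = Real.sqrt (1 - ⟪u, v⟫ ^ 2) := norm_sub_proj hu hv
    have hn2 : ‖w - ⟪w, v⟫ • v‖ = Real.sqrt (1 - ⟪w, v⟫ ^ 2) := norm_sub_proj hw hv
    rw [hinner, hn1, hn2, real_inner_comm v w] at hcs
    have := abs_le.mp hcs
    linarith [this.1]
  rcases le_or_gt Real.pi (Real.arccos ⟪u, v⟫ + Real.arccos ⟪v, w⟫) with h | h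
  · linarith [Real.arccos_le_pi ⟪u, w⟫]
  · have hsum0 : 0 ≤ Real.arccos ⟪u, v⟫ + Real.arccos ⟪v, w⟫ :=
      add_nonneg (Real.arccos_nonneg _) (Real.arccos_nonneg _)
    have hcos : Real.cos (Real.arccos ⟪u, v⟫ + Real.arccos ⟪v, w⟫) ≤ ⟪u, w⟫ := by
      rw [Real.cos_add, Real.cos_arccos (neg_le_of_abs_le ha1) (le_of_abs_le ha1),
        Real.cos_arccos (neg_le_of_abs_le hb1) (le_of_abs_le hb1),
        Real.sin_arccos, Real.sin_arccos]
      linarith [hG]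
    calc Real.arccos ⟪u, w⟫
        ≤ Real.arccos (Real.cos (Real.arccos ⟪u, v⟫ + Real.arccos ⟪v, w⟫)) :=
          arccos_le_arccos hcos
      _ = Real.arccos ⟪u, v⟫ + Real.arccos ⟪v, w⟫ := Real.arccos_cos hsum0 h.le

lemma rho_triangle {u v w : E} (hu : ‖u‖ = 1) (hv : ‖v‖ = 1) (hw : ‖w‖ = 1) :
    rho u w ≤ rho u v + rho v w := by
  have key : ∀ u' w' : E, ‖u'‖ = 1 → ‖w'‖ = 1 → ⟪u', v⟫ = |⟪u, v⟫| →
      ⟪v, w'⟫ = |⟪v, w⟫| → ⟪u', w'⟫ ≤ |⟪u, w⟫| → rho u w ≤ rho u v + rho v w := by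
    intro u' w' hu' hw' e1 e2 e3
    have h1 : Real.arccos |⟪u, w⟫| ≤ Real.arccos ⟪u', w'⟫ := arccos_le_arccos e3
    have h2 := sph_triangle hu' hv hw'
    rw [e1, e2] at h2
    have e4 : rho u w = Real.arccos |⟪u, w⟫| := rfl
    have e5 : rho u v = Real.arccos |⟪u, v⟫| := rfl
    have e6 : rho v w = Real.arccos |⟪v, w⟫| := rfl
    linarith
  by_cases h1 : 0 ≤ ⟪u, v⟫ <;> by_cases h2 : 0 ≤ ⟪v, w⟫
  · exact key u w hu hw (abs_of_nonneg h1).symm (abs_of_nonneg h2).symm (le_abs_self _)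
  · refine key u (-w) hu (by rw [norm_neg]; exact hw) (abs_of_nonneg h1).symm ?_ ?_
    · rw [inner_neg_right, abs_of_neg (lt_of_not_ge h2)]
    · rw [inner_neg_right]; exact neg_le_abs _
  · refine key (-u) w (by rw [norm_neg]; exact hu) hw ?_ (abs_of_nonneg h2).symm ?_
    · rw [inner_neg_left, abs_of_neg (lt_of_not_ge h1)]
    · rw [inner_neg_left]; exact neg_le_abs _
  · refine key (-u) (-w) (by rw [norm_neg]; exact hu) (by rw [norm_neg]; exact hw) ?_ ?_ ?_
    · rw [inner_neg_left, abs_of_neg (lt_of_not_ge h1)]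
    · rw [inner_neg_right, abs_of_neg (lt_of_not_ge h2)]
    · rw [inner_neg_left, inner_neg_right, neg_neg]; exact le_abs_self _

lemma sqrt_fac_mono {ω r δ : ℝ} (hω : 0 < ω) (hωr : ω ≤ r) (hrδ : r ≤ δ) :
    (δ / r) * Real.sqrt (δ ^ 2 - r ^ 2) ≤ (δ / ω) * Real.sqrt (δ ^ 2 - ω ^ 2) := by
  have hr : 0 < r := lt_of_lt_of_le hω hωr
  have hδ : 0 < δ := lt_of_lt_of_le hr hrδ
  have key : ω * Real.sqrt (δ ^ 2 - r ^ 2) ≤ r * Real.sqrt (δ ^ 2 - ω ^ 2) := by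
    have h1 : ω * Real.sqrt (δ ^ 2 - r ^ 2) = Real.sqrt (ω ^ 2 * (δ ^ 2 - r ^ 2)) := by
      rw [Real.sqrt_mul (sq_nonneg ω), Real.sqrt_sq hω.le]
    have h2 : r * Real.sqrt (δ ^ 2 - ω ^ 2) = Real.sqrt (r ^ 2 * (δ ^ 2 - ω ^ 2)) := by
      rw [Real.sqrt_mul (sq_nonneg r), Real.sqrt_sq hr.le]
    rw [h1, h2]
    apply Real.sqrt_le_sqrt
    nlinarith [mul_le_mul_of_nonneg_right (mul_le_mul hωr hωr hω.le (hω.le.trans hωr)) (sq_nonneg δ)]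
  rw [div_mul_eq_mul_div, div_mul_eq_mul_div, div_le_div_iff₀ hr hω]
  nlinarith [mul_le_mul_of_nonneg_left key hδ.le]

set_option maxHeartbeats 1000000 in
lemma core_ineq {du dv r ω δ α β ρ : ℝ} (hω : 0 < ω) (hωr : ω ≤ r) (hrdv : r ≤ dv)
    (hdvδ : dv ≤ δ) (hduδ : du ≤ δ)
    (hα0 : 0 ≤ α) (hα : α ≤ Real.pi / 2) (hβ0 : 0 ≤ β) (hβ : β ≤ Real.pi / 2)
    (hdu : du * Real.cos α ≤ r) (hdv : dv * Real.cos β = r) (hαβρ : α ≤ β + ρ) (hρ : 0 ≤ ρ) :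
    du - dv ≤ (δ / ω) * Real.sqrt (δ ^ 2 - ω ^ 2) * ρ := by
  have hr : 0 < r := lt_of_lt_of_le hω hωr
  have hdv0 : 0 < dv := lt_of_lt_of_le hr hrdv
  have hδ : 0 < δ := lt_of_lt_of_le hdv0 hdvδ
  have hπ := Real.pi_pos
  have hN : 0 ≤ (δ / ω) * Real.sqrt (δ ^ 2 - ω ^ 2) := by positivity
  have hcosβ : Real.cos β = r / dv := by
    rw [eq_div_iff hdv0.ne']; linear_combination hdv
  have hcosβ_pos : 0 < Real.cos β := by rw [hcosβ]; positivity
  have hcosβ_ge : r / δ ≤ Real.cos β := by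
    rw [hcosβ]
    exact div_le_div_of_nonneg_left hr.le hdv0 hdvδ
  rcases le_or_gt α β with hcase | hcase
  · have hcc : Real.cos β ≤ Real.cos α :=
      Real.cos_le_cos_of_nonneg_of_le_pi hα0 (by linarith) hcase
    have hmul : du * Real.cos β ≤ dv * Real.cos β := by nlinarith
    have hdudv : du ≤ dv := le_of_mul_le_mul_right (by linarith) hcosβ_pos
    nlinarith
  · set α₀ := Real.arccos (r / δ) with hα₀def
    have hrδ : r ≤ δ := le_trans hrdv hdvδ
    have hrδ1 : r / δ ≤ 1 := by rw [div_le_one hδ]; linarith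
    have hrδ0 : 0 < r / δ := by positivity
    have hcosα₀ : Real.cos α₀ = r / δ := Real.cos_arccos (by linarith) hrδ1
    have hα₀0 : 0 ≤ α₀ := Real.arccos_nonneg _
    have hα₀π : α₀ ≤ Real.pi / 2 := Real.arccos_le_pi_div_two.mpr hrδ0.le
    set γ := min α α₀ with hγdef
    have hγ0 : 0 ≤ γ := le_min hα0 hα₀0
    have hγπ : γ ≤ Real.pi / 2 := le_trans (min_le_left _ _) hα
    have hβγ : β ≤ γ := by
      refine le_min hcase.le ?_
      have hββ : β = Real.arccos (Real.cos β) := (Real.arccos_cos hβ0 (by linarith)).symm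
      rw [hββ]
      exact arccos_le_arccos hcosβ_ge
    have hcosγ_ge : r / δ ≤ Real.cos γ := by
      rw [← hcosα₀]
      exact Real.cos_le_cos_of_nonneg_of_le_pi hγ0 (by linarith) (min_le_right _ _)
    have hcosγ_pos : 0 < Real.cos γ := lt_of_lt_of_le hrδ0 hcosγ_ge
    have F1 : r ≤ Real.cos γ * δ := (div_le_iff₀ hδ).mp hcosγ_ge
    have F2 : r ≤ Real.cos β * δ := (div_le_iff₀ hδ).mp hcosβ_ge
    have hduγ : du * Real.cos γ ≤ r := by
      rcases le_total α α₀ with h | h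
      · rw [hγdef, min_eq_left h]; exact hdu
      · rw [hγdef, min_eq_right h, hcosα₀]
        calc du * (r / δ) ≤ δ * (r / δ) := by
              apply mul_le_mul_of_nonneg_right hduδ hrδ0.le
          _ = r := by field_simp
    set sγ := Real.sqrt (δ ^ 2 - r ^ 2) with hsdef
    have hsnn : 0 ≤ sγ := Real.sqrt_nonneg _
    have hs0 : 0 ≤ Real.sin γ := Real.sin_nonneg_of_nonneg_of_le_pi hγ0 (by linarith)
    have hsinγ : Real.sin γ * δ ≤ sγ := by
      rw [hsdef, ← Real.sqrt_sq (by positivity : (0:ℝ) ≤ Real.sin γ * δ)]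
      apply Real.sqrt_le_sqrt
      nlinarith [Real.sin_sq_add_cos_sq γ,
        mul_le_mul F1 F1 hr.le (by positivity : (0:ℝ) ≤ Real.cos γ * δ)]
    have hcos_sub : Real.cos β - Real.cos γ ≤ Real.sin γ * (γ - β) := by
      have hid := Real.cos_sub_cos β γ
      have hsin1 : Real.sin ((β + γ) / 2) ≤ Real.sin γ := by
        apply Real.sin_le_sin_of_le_of_le_pi_div_two <;> linarith
      have hsin2 : Real.sin ((γ - β) / 2) ≤ (γ - β) / 2 := Real.sin_le (by linarith)
      have hsin2' : 0 ≤ Real.sin ((γ - β) / 2) :=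
        Real.sin_nonneg_of_nonneg_of_le_pi (by linarith) (by linarith)
      have hrw : Real.sin ((β - γ) / 2) = -Real.sin ((γ - β) / 2) := by
        rw [← Real.sin_neg]; ring_nf
      rw [hid, hrw]
      nlinarith [mul_le_mul hsin1 hsin2 hsin2' hs0]
    rcases le_or_gt du dv with hdd | hdd
    · nlinarith
    · have hX : (0:ℝ) ≤ du - dv := by linarith
      have hγβ0 : (0:ℝ) ≤ γ - β := by linarith
      have hA1 : (du - dv) * (Real.cos γ * Real.cos β) ≤ r * (Real.sin γ * (γ - β)) := by
        have h1 : du * Real.cos γ * Real.cos β ≤ r * Real.cos β :=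
          mul_le_mul_of_nonneg_right hduγ hcosβ_pos.le
        have h2 : dv * Real.cos β * Real.cos γ = r * Real.cos γ := by rw [hdv]
        nlinarith [mul_le_mul_of_nonneg_left hcos_sub hr.le]
      have hkey : (du - dv) * r ≤ δ * sγ * (γ - β) := by
        have E2 : r * r ≤ (Real.cos γ * δ) * (Real.cos β * δ) :=
          mul_le_mul F1 F2 hr.le (by positivity)
        have S1 : (du - dv) * (r * r) ≤ (du - dv) * ((Real.cos γ * δ) * (Real.cos β * δ)) :=
          mul_le_mul_of_nonneg_left E2 hX
        have S3 : ((du - dv) * (Real.cos γ * Real.cos β)) * (δ * δ) ≤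
            (r * (Real.sin γ * (γ - β))) * (δ * δ) :=
          mul_le_mul_of_nonneg_right hA1 (by positivity)
        have S5 : (Real.sin γ * δ) * ((γ - β) * r) ≤ sγ * ((γ - β) * r) :=
          mul_le_mul_of_nonneg_right hsinγ (by positivity)
        have hchain : ((du - dv) * r) * r ≤ (δ * sγ * (γ - β)) * r := by nlinarith
        exact le_of_mul_le_mul_right hchain hr
      have h4 : du - dv ≤ δ / r * sγ * (γ - β) := by
        rw [div_mul_eq_mul_div, div_mul_eq_mul_div, le_div_iff₀ hr]
        linarith
      have hγβρ : γ - β ≤ ρ := by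
        have hγα : γ ≤ α := min_le_left _ _
        linarith
      calc du - dv ≤ δ / r * sγ * (γ - β) := h4
        _ ≤ δ / ω * Real.sqrt (δ ^ 2 - ω ^ 2) * (γ - β) :=
            mul_le_mul_of_nonneg_right (sqrt_fac_mono hω hωr hrδ) hγβ0
        _ ≤ δ / ω * Real.sqrt (δ ^ 2 - ω ^ 2) * ρ :=
            mul_le_mul_of_nonneg_left hγβρ hN


lemma main_aux {K : Set E} (hKc : IsCompact K) (hKconv : Convex ℝ K)
    (hKint : (interior K).Nonempty) {u v : E} (hu : ‖u‖ = 1) (hv : ‖v‖ = 1) :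
    dirDiam K u - dirDiam K v ≤
      (Metric.diam K / (⨅ w : sphere (0 : EuclideanSpace ℝ (Fin n)) 1, dirDiam K w)) *
        Real.sqrt ((Metric.diam K) ^ 2 -
          (⨅ w : sphere (0 : EuclideanSpace ℝ (Fin n)) 1, dirDiam K w) ^ 2) * rho u v := by
  have hb := hKc.isBounded
  have hne : K.Nonempty := hKint.mono interior_subset
  obtain ⟨cc, hcc⟩ := id hKint
  obtain ⟨ε, hε, hball⟩ := Metric.isOpen_iff.mp isOpen_interior _ hcc
  have hballK : Metric.ball cc ε ⊆ K := hball.trans interior_subset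
  set ω := ⨅ w : sphere (0 : EuclideanSpace ℝ (Fin n)) 1, dirDiam K (↑w) with hωdef
  have hsne : Nonempty (sphere (0 : EuclideanSpace ℝ (Fin n)) 1) :=
    ⟨⟨v, mem_sphere_zero_iff_norm.mpr hv⟩⟩
  have hbdd : BddBelow (Set.range fun w : sphere (0 : EuclideanSpace ℝ (Fin n)) 1 =>
      dirDiam K (↑w : E)) := by
    refine ⟨0, ?_⟩
    rintro x ⟨w, rfl⟩
    exact dirDiam_nonneg hb hne _
  have hωlb : ε / 2 ≤ ω :=
    le_ciInf fun w => eps_le_dirDiam hb hε hballK (mem_sphere_zero_iff_norm.mp w.2)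
  have hω : 0 < ω := lt_of_lt_of_le (by positivity) hωlb
  have hωv : ω ≤ dirDiam K v := ciInf_le hbdd ⟨v, mem_sphere_zero_iff_norm.mpr hv⟩
  have hdv_pos : 0 < dirDiam K v := lt_of_lt_of_le hω hωv
  obtain ⟨A, hA, B, hB, w, hw, hAB, hup, hlo⟩ := exists_support hKc hKconv hKint hv hdv_pos
  have hrval : dirDiam K v * ⟪v, w⟫ = ⟪A, w⟫ - ⟪B, w⟫ := by
    have h := inner_sub_left (𝕜 := ℝ) A B w
    rw [hAB, real_inner_smul_left] at h
    linarith [h]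
  set r := ⟪A, w⟫ - ⟪B, w⟫ with hrdef
  have hωw : ω ≤ dirDiam K w := ciInf_le hbdd ⟨w, mem_sphere_zero_iff_norm.mpr hw⟩
  have hωr : ω ≤ r := by
    have h1 := dirDiam_mul_le hb hne hA hB hup hlo hw
    have h2 : ⟪w, w⟫ = (1:ℝ) := by
      rw [real_inner_self_eq_norm_sq, hw]; norm_num
    rw [h2, abs_one, mul_one] at h1
    linarith
  have habs_vw : |⟪v, w⟫| ≤ 1 := by
    have := abs_real_inner_le_norm v w; rw [hv, hw] at this; simpa using this
  have habs_uw : |⟪u, w⟫| ≤ 1 := by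
    have := abs_real_inner_le_norm u w; rw [hu, hw] at this; simpa using this
  have habs_uv : |⟪u, v⟫| ≤ 1 := by
    have := abs_real_inner_le_norm u v; rw [hu, hv] at this; simpa using this
  have hvw_pos : 0 < ⟪v, w⟫ := by nlinarith
  set α := Real.arccos |⟪u, w⟫| with hαdef
  set β := Real.arccos |⟪v, w⟫| with hβdef
  have hcosα : Real.cos α = |⟪u, w⟫| := Real.cos_arccos (by linarith [abs_nonneg ⟪u, w⟫]) habs_uw
  have hcosβ : Real.cos β = |⟪v, w⟫| := Real.cos_arccos (by linarith [abs_nonneg ⟪v, w⟫]) habs_vw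
  have hducos : dirDiam K u * Real.cos α ≤ r := by
    rw [hcosα]; exact dirDiam_mul_le hb hne hA hB hup hlo hu
  have hdvcos : dirDiam K v * Real.cos β = r := by
    rw [hcosβ, abs_of_pos hvw_pos]; exact hrval
  have hrdv : r ≤ dirDiam K v := by
    rw [← hdvcos]
    nlinarith [hcosβ, abs_nonneg ⟪v, w⟫, hdv_pos]
  have hαβ : α ≤ β + rho u v := by
    have h := rho_triangle hu hv hw
    have e1 : rho u w = α := rfl
    have e2 : rho v w = β := rfl
    linarith
  exact core_ineq hω hωr hrdv (dirDiam_le_diam hb hne v) (dirDiam_le_diam hb hne u)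
    (Real.arccos_nonneg _) (Real.arccos_le_pi_div_two.mpr (abs_nonneg _))
    (Real.arccos_nonneg _) (Real.arccos_le_pi_div_two.mpr (abs_nonneg _))
    hducos hdvcos hαβ (Real.arccos_nonneg _)

end DirDiamProof

theorem dirDiam_lipschitz {n : ℕ} (hn : 2 ≤ n) (K : Set (EuclideanSpace ℝ (Fin n)))
    (hKc : IsCompact K) (hKconv : Convex ℝ K) (hKint : (interior K).Nonempty)
    (u v : EuclideanSpace ℝ (Fin n)) (hu : ‖u‖ = 1) (hv : ‖v‖ = 1)
    (huv : u ≠ v) (huv' : u ≠ -v) :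
    |dirDiam K u - dirDiam K v| ≤
      (Metric.diam K / (⨅ w : sphere (0 : EuclideanSpace ℝ (Fin n)) 1, dirDiam K w)) *
        Real.sqrt ((Metric.diam K) ^ 2 -
          (⨅ w : sphere (0 : EuclideanSpace ℝ (Fin n)) 1, dirDiam K w) ^ 2) * rho u v := by
  have h1 := DirDiamProof.main_aux hKc hKconv hKint hu hv
  have h2 := DirDiamProof.main_aux hKc hKconv hKint hv hu
  have hsym : rho v u = rho u v := by unfold rho; rw [real_inner_comm u v]
  rw [hsym] at h2
  rw [abs_sub_le_iff]
  exact ⟨h1, h2⟩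
end

section
/- For K = B̄(0,1) ∩ {|x₁| ≤ cos α} in ℝ² with α ∈ [0, π/2), and u_θ = (cos θ, sin θ): d_K(u_θ) = 2 if α ≤ θ ≤ π/2, and d_K(u_θ) = 2cos α / cos θ if 0 ≤ θ ≤ α. -/
open scoped RealInnerProductSpace
open Metric Filter

theorem truncated_disk_dirDiam (α : ℝ) (hα0 : 0 ≤ α) (hα1 : α < Real.pi / 2)
    (K : Set (EuclideanSpace ℝ (Fin 2)))
    (hK : K = {x : EuclideanSpace ℝ (Fin 2) | ‖x‖ ≤ 1 ∧ |x 0| ≤ Real.cos α}) :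
    (∀ θ : ℝ, α ≤ θ → θ ≤ Real.pi / 2 →
      dirDiam K ((EuclideanSpace.equiv (Fin 2) ℝ).symm ![Real.cos θ, Real.sin θ]) = 2) ∧
    (∀ θ : ℝ, 0 ≤ θ → θ ≤ α →
      dirDiam K ((EuclideanSpace.equiv (Fin 2) ℝ).symm ![Real.cos θ, Real.sin θ]) =
        2 * Real.cos α / Real.cos θ) := by
  subst hK
  have hcosα : 0 < Real.cos α := Real.cos_pos_of_mem_Ioo
    ⟨lt_of_lt_of_le (neg_neg_of_pos (by positivity : (0:ℝ) < Real.pi/2)) hα0, hα1⟩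
  constructor
  · intro θ hθ1 hθ2
    set u : EuclideanSpace ℝ (Fin 2) :=
      (EuclideanSpace.equiv (Fin 2) ℝ).symm ![Real.cos θ, Real.sin θ] with hu
    have hnu : ‖u‖ = 1 := by
      rw [hu, EuclideanSpace.norm_eq]
      simp [Fin.sum_univ_two, Real.norm_eq_abs, sq_abs]
    have hu0 : u 0 = Real.cos θ := rfl
    have hcos_nonneg : 0 ≤ Real.cos θ :=
      Real.cos_nonneg_of_mem_Icc ⟨by linarith [Real.pi_pos, hα0.trans hθ1], hθ2⟩
    have hcosle : Real.cos θ ≤ Real.cos α :=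
      Real.cos_le_cos_of_nonneg_of_le_pi hα0 (by linarith [Real.pi_pos]) hθ1
    have huK : u ∈ {x : EuclideanSpace ℝ (Fin 2) | ‖x‖ ≤ 1 ∧ |x 0| ≤ Real.cos α} := by
      refine ⟨le_of_eq hnu, ?_⟩
      rw [hu0, abs_of_nonneg hcos_nonneg]; exact hcosle
    have hnuK : -u ∈ {x : EuclideanSpace ℝ (Fin 2) | ‖x‖ ≤ 1 ∧ |x 0| ≤ Real.cos α} := by
      refine ⟨by rw [norm_neg, hnu], ?_⟩
      have : (-u) 0 = -(u 0) := rfl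
      rw [this, abs_neg, hu0, abs_of_nonneg hcos_nonneg]; exact hcosle
    have hmem : (2:ℝ) ∈ {d : ℝ | ∃ x ∈ {x : EuclideanSpace ℝ (Fin 2) | ‖x‖ ≤ 1 ∧ |x 0| ≤ Real.cos α},
        ∃ y ∈ {x : EuclideanSpace ℝ (Fin 2) | ‖x‖ ≤ 1 ∧ |x 0| ≤ Real.cos α},
        (∃ t : ℝ, x - y = t • u) ∧ d = dist x y} := by
      refine ⟨u, huK, -u, hnuK, ⟨2, by module⟩, ?_⟩
      rw [dist_eq_norm, show u - -u = (2:ℝ) • u by module, norm_smul, hnu]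
      norm_num
    have hbdd : ∀ d ∈ {d : ℝ | ∃ x ∈ {x : EuclideanSpace ℝ (Fin 2) | ‖x‖ ≤ 1 ∧ |x 0| ≤ Real.cos α},
        ∃ y ∈ {x : EuclideanSpace ℝ (Fin 2) | ‖x‖ ≤ 1 ∧ |x 0| ≤ Real.cos α},
        (∃ t : ℝ, x - y = t • u) ∧ d = dist x y}, d ≤ 2 := by
      rintro d ⟨x, hx, y, hy, -, rfl⟩
      calc dist x y ≤ ‖x‖ + ‖y‖ := dist_le_norm_add_norm x y
        _ ≤ 2 := by linarith [hx.1, hy.1]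
    exact le_antisymm (csSup_le ⟨2, hmem⟩ hbdd) (le_csSup ⟨2, hbdd⟩ hmem)
  · intro θ hθ1 hθ2
    set u : EuclideanSpace ℝ (Fin 2) :=
      (EuclideanSpace.equiv (Fin 2) ℝ).symm ![Real.cos θ, Real.sin θ] with hu
    have hnu : ‖u‖ = 1 := by
      rw [hu, EuclideanSpace.norm_eq]
      simp [Fin.sum_univ_two, Real.norm_eq_abs, sq_abs]
    have hu0 : u 0 = Real.cos θ := rfl
    have hθπ : θ < Real.pi / 2 := lt_of_le_of_lt hθ2 hα1
    have hcosθ : 0 < Real.cos θ := Real.cos_pos_of_mem_Ioo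
      ⟨by linarith [Real.pi_pos], hθπ⟩
    have hcosle : Real.cos α ≤ Real.cos θ :=
      Real.cos_le_cos_of_nonneg_of_le_pi hθ1 (by linarith [Real.pi_pos]) hθ2
    set c : ℝ := Real.cos α / Real.cos θ with hc
    have hc0 : 0 < c := div_pos hcosα hcosθ
    have hc1 : c ≤ 1 := (div_le_one hcosθ).2 hcosle
    have hxK : c • u ∈ {x : EuclideanSpace ℝ (Fin 2) | ‖x‖ ≤ 1 ∧ |x 0| ≤ Real.cos α} := by
      constructor
      · rw [norm_smul, hnu, mul_one, Real.norm_eq_abs, abs_of_pos hc0]; exact hc1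
      · have : (c • u) 0 = c * Real.cos θ := by rw [PiLp.smul_apply, hu0, smul_eq_mul]
        rw [this, hc, div_mul_cancel₀ _ (ne_of_gt hcosθ), abs_of_pos hcosα]
    have hyK : -(c • u) ∈ {x : EuclideanSpace ℝ (Fin 2) | ‖x‖ ≤ 1 ∧ |x 0| ≤ Real.cos α} := by
      refine ⟨by rw [norm_neg]; exact hxK.1, ?_⟩
      have : (-(c • u)) 0 = -((c • u) 0) := rfl
      rw [this, abs_neg]; exact hxK.2
    have hmem : (2 * Real.cos α / Real.cos θ) ∈ {d : ℝ | ∃ x ∈ {x : EuclideanSpace ℝ (Fin 2) | ‖x‖ ≤ 1 ∧ |x 0| ≤ Real.cos α},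
        ∃ y ∈ {x : EuclideanSpace ℝ (Fin 2) | ‖x‖ ≤ 1 ∧ |x 0| ≤ Real.cos α},
        (∃ t : ℝ, x - y = t • u) ∧ d = dist x y} := by
      refine ⟨c • u, hxK, -(c • u), hyK, ⟨2 * c, by module⟩, ?_⟩
      rw [dist_eq_norm, show c • u - -(c • u) = (2*c:ℝ) • u by module, norm_smul, hnu,
        mul_one, Real.norm_eq_abs, abs_of_pos (by linarith), hc]
      ring
    have hbdd : ∀ d ∈ {d : ℝ | ∃ x ∈ {x : EuclideanSpace ℝ (Fin 2) | ‖x‖ ≤ 1 ∧ |x 0| ≤ Real.cos α},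
        ∃ y ∈ {x : EuclideanSpace ℝ (Fin 2) | ‖x‖ ≤ 1 ∧ |x 0| ≤ Real.cos α},
        (∃ t : ℝ, x - y = t • u) ∧ d = dist x y}, d ≤ 2 * Real.cos α / Real.cos θ := by
      rintro d ⟨x, hx, y, hy, ⟨t, ht⟩, rfl⟩
      have hdist : dist x y = |t| := by
        rw [dist_eq_norm, ht, norm_smul, hnu, mul_one, Real.norm_eq_abs]
      have hcoord : x 0 - y 0 = t * Real.cos θ := by
        have := congrFun (congrArg (fun z : EuclideanSpace ℝ (Fin 2) => (z : Fin 2 → ℝ)) ht) 0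
        simpa [hu0] using this
      have habs : |t| * Real.cos θ ≤ 2 * Real.cos α := by
        have h1 : |t * Real.cos θ| ≤ 2 * Real.cos α := by
          rw [← hcoord]
          calc |x 0 - y 0| ≤ |x 0| + |y 0| := abs_sub _ _
            _ ≤ 2 * Real.cos α := by linarith [hx.2, hy.2]
        rwa [abs_mul, abs_of_pos hcosθ] at h1
      rw [hdist, div_eq_iff (ne_of_gt hcosθ)] at *
      exact (le_div_iff₀ hcosθ).2 habs
    exact le_antisymm (csSup_le ⟨_, hmem⟩ hbdd) (le_csSup ⟨_, hbdd⟩ hmem)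
end

section
/- For a convex body K ⊆ ℝⁿ, the function e_K(O) := sup of the lengths of chords of K cut by lines through O is upper semicontinuous on ℝⁿ. -/
open scoped RealInnerProductSpace
open Metric Filter

open Topology in
lemma collinear_iff_ineq {n : ℕ} (a b c : EuclideanSpace ℝ (Fin n)) :
    Collinear ℝ ({a, b, c} : Set (EuclideanSpace ℝ (Fin n))) ↔
      ‖b - a‖ * ‖c - a‖ ≤ |⟪b - a, c - a⟫| := by
  constructor
  · intro h
    obtain ⟨v, hv⟩ := (collinear_iff_of_mem (Set.mem_insert a {b, c})).1 h
    obtain ⟨r₁, hb⟩ := hv b (by simp)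
    obtain ⟨r₂, hc⟩ := hv c (by simp)
    have hb' : b - a = r₁ • v := by rw [hb]; abel_nf; simp [vadd_eq_add]
    have hc' : c - a = r₂ • v := by rw [hc]; abel_nf; simp [vadd_eq_add]
    rw [hb', hc', real_inner_smul_left, real_inner_smul_right,
      real_inner_self_eq_norm_mul_norm, norm_smul, norm_smul]
    simp only [abs_mul, abs_abs, Real.norm_eq_abs, abs_norm]
    nlinarith [abs_nonneg r₁, abs_nonneg r₂, norm_nonneg v]
  · intro h
    rcases eq_or_ne b a with hba | hba
    · subst hba
      rw [Set.insert_idem]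
      exact collinear_pair ℝ b c
    rcases eq_or_ne c a with hca | hca
    · subst hca
      have : ({c, b, c} : Set (EuclideanSpace ℝ (Fin n))) = {c, b} := by
        ext x; simp; tauto
      rw [this]
      exact collinear_pair ℝ c b
    have hb0 : b - a ≠ 0 := sub_ne_zero.2 hba
    have hc0 : c - a ≠ 0 := sub_ne_zero.2 hca
    have heq : ‖⟪b - a, c - a⟫‖ = ‖b - a‖ * ‖c - a‖ :=
      le_antisymm (norm_inner_le_norm _ _) (by rwa [Real.norm_eq_abs])
    obtain ⟨r, hr0, hr⟩ := (norm_inner_eq_norm_iff hb0 hc0).1 heq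
    rw [collinear_iff_of_mem (Set.mem_insert a {b, c})]
    refine ⟨b - a, fun p hp => ?_⟩
    simp only [Set.mem_insert_iff, Set.mem_singleton_iff] at hp
    rcases hp with rfl | rfl | rfl
    · exact ⟨0, by simp⟩
    · exact ⟨1, by simp⟩
    · exact ⟨r, by rw [← hr]; simp⟩

open Topology in
theorem eFn_upperSemicontinuous {n : ℕ} (hn : 2 ≤ n) (K : Set (EuclideanSpace ℝ (Fin n)))
    (hKc : IsCompact K) (hKconv : Convex ℝ K) (hKint : (interior K).Nonempty) :
    UpperSemicontinuous (eFn K) := by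
  obtain ⟨x₀, hx₀⟩ : K.Nonempty := hKint.mono interior_subset
  obtain ⟨C, hC⟩ : ∃ C, ∀ x ∈ K, ∀ y ∈ K, dist x y ≤ C := by
    obtain ⟨C, hC⟩ := Metric.isBounded_iff.1 hKc.isBounded
    exact ⟨C, fun x hx y hy => hC hx hy⟩
  have hbdd : ∀ O : EuclideanSpace ℝ (Fin n), BddAbove {d : ℝ | ∃ x ∈ K, ∃ y ∈ K,
      Collinear ℝ ({O, x, y} : Set (EuclideanSpace ℝ (Fin n))) ∧ d = dist x y} := by
    intro O
    exact ⟨C, by rintro d ⟨x, hx, y, hy, -, rfl⟩; exact hC x hx y hy⟩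
  have hne : ∀ O : EuclideanSpace ℝ (Fin n), ({d : ℝ | ∃ x ∈ K, ∃ y ∈ K,
      Collinear ℝ ({O, x, y} : Set (EuclideanSpace ℝ (Fin n))) ∧ d = dist x y}).Nonempty := by
    intro O
    refine ⟨0, x₀, hx₀, x₀, hx₀, ?_, (dist_self x₀).symm⟩
    have h : ({O, x₀, x₀} : Set (EuclideanSpace ℝ (Fin n))) = {O, x₀} := by
      ext z; simp
    rw [h]
    exact collinear_pair ℝ O x₀
  intro O y hy
  by_contra hcon
  rw [Filter.not_eventually] at hcon
  have hseq : ∀ k : ℕ, ∃ O' : EuclideanSpace ℝ (Fin n),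
      dist O' O < 1 / (k + 1) ∧ ∃ x ∈ K, ∃ y' ∈ K,
        Collinear ℝ ({O', x, y'} : Set (EuclideanSpace ℝ (Fin n))) ∧
        y - 1 / (k + 1) < dist x y' := by
    intro k
    have hk : (0 : ℝ) < 1 / (k + 1) := by positivity
    have hball : ∀ᶠ x in 𝓝 O, x ∈ Metric.ball O (1 / (k + 1)) :=
      (Metric.ball_mem_nhds O hk)
    obtain ⟨O', hO'1, hO'2⟩ := (hcon.and_eventually hball).exists
    have hle : y ≤ eFn K O' := le_of_not_gt hO'1
    have hlt : y - 1 / (k + 1) < eFn K O' := by linarith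
    obtain ⟨d, hd, hdlt⟩ := exists_lt_of_lt_csSup (hne O') hlt
    obtain ⟨x, hx, y', hy', hcol, rfl⟩ := hd
    exact ⟨O', by simpa [Metric.mem_ball] using hO'2, x, hx, y', hy', hcol, hdlt⟩
  choose Os hOs xs hxs ys hys hcol hdlt using hseq
  have hmemprod : ∀ k : ℕ, (xs k, ys k) ∈ K ×ˢ K := fun k => ⟨hxs k, hys k⟩
  obtain ⟨⟨X, Y⟩, hXY, φ, hφ, hconv⟩ := (hKc.prod hKc).tendsto_subseq hmemprod
  obtain ⟨hXK, hYK⟩ : X ∈ K ∧ Y ∈ K := hXY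
  have hXt : Tendsto (fun k => xs (φ k)) atTop (𝓝 X) :=
    (continuous_fst.tendsto _).comp hconv
  have hYt : Tendsto (fun k => ys (φ k)) atTop (𝓝 Y) :=
    (continuous_snd.tendsto _).comp hconv
  have hinv : Tendsto (fun k : ℕ => 1 / ((k : ℝ) + 1)) atTop (𝓝 0) :=
    tendsto_one_div_add_atTop_nhds_zero_nat
  have hinvφ : ∀ k : ℕ, 1 / ((φ k : ℝ) + 1) ≤ 1 / ((k : ℝ) + 1) := by
    intro k
    apply one_div_le_one_div_of_le (by positivity)
    have h := hφ.le_apply (x := k)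
    have : (k : ℝ) ≤ (φ k : ℝ) := Nat.cast_le.2 h
    linarith
  have hOt : Tendsto (fun k => Os (φ k)) atTop (𝓝 O) := by
    rw [tendsto_iff_dist_tendsto_zero]
    refine squeeze_zero (fun k => dist_nonneg) (fun k => ?_) hinv
    exact le_trans (hOs (φ k)).le (hinvφ k)
  -- dist X Y ≥ y
  have hdXY : y ≤ dist X Y := by
    have hdt : Tendsto (fun k => dist (xs (φ k)) (ys (φ k))) atTop (𝓝 (dist X Y)) :=
      hXt.dist hYt
    have hyt : Tendsto (fun k : ℕ => y - 1 / ((k : ℝ) + 1)) atTop (𝓝 y) := by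
      simpa using tendsto_const_nhds.sub hinv
    refine le_of_tendsto_of_tendsto hyt hdt (Filter.Eventually.of_forall fun k => ?_)
    calc y - 1 / ((k : ℝ) + 1) ≤ y - 1 / ((φ k : ℝ) + 1) := by linarith [hinvφ k]
      _ ≤ dist (xs (φ k)) (ys (φ k)) := (hdlt (φ k)).le
  -- collinearity in the limit
  have hcolL : Collinear ℝ ({O, X, Y} : Set (EuclideanSpace ℝ (Fin n))) := by
    rw [collinear_iff_ineq]
    have h1 : Tendsto (fun k => ‖xs (φ k) - Os (φ k)‖ * ‖ys (φ k) - Os (φ k)‖) atTop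
        (𝓝 (‖X - O‖ * ‖Y - O‖)) :=
      ((hXt.sub hOt).norm).mul ((hYt.sub hOt).norm)
    have h2 : Tendsto (fun k => |⟪xs (φ k) - Os (φ k), ys (φ k) - Os (φ k)⟫|) atTop
        (𝓝 (|⟪X - O, Y - O⟫|)) :=
      ((hXt.sub hOt).inner (hYt.sub hOt)).abs
    refine le_of_tendsto_of_tendsto h1 h2 (Filter.Eventually.of_forall fun k => ?_)
    exact (collinear_iff_ineq _ _ _).1 (hcol (φ k))
  have hmem : dist X Y ∈ {d : ℝ | ∃ x ∈ K, ∃ y ∈ K,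
      Collinear ℝ ({O, x, y} : Set (EuclideanSpace ℝ (Fin n))) ∧ d = dist x y} :=
    ⟨X, hXK, Y, hYK, hcolL, rfl⟩
  have := le_csSup (hbdd O) hmem
  have hlt : eFn K O < y := hy
  unfold eFn at hlt
  linarith
end

section
/- For a convex body K ⊆ ℝⁿ, the function e_K is continuous at every point of the interior of K and at every point of the complement ℝⁿ \ K. -/
open scoped RealInnerProductSpace
open Metric Filter

section Aux
variable {n : ℕ}
local notation "E" => EuclideanSpace ℝ (Fin n)

lemma collinear_triple {a b c v : E} (hb : ∃ r : ℝ, b - a = r • v)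
    (hc : ∃ r : ℝ, c - a = r • v) : Collinear ℝ ({a, b, c} : Set E) := by
  rw [collinear_iff_of_mem (Set.mem_insert a {b, c})]
  refine ⟨v, ?_⟩
  intro p hp
  simp only [Set.mem_insert_iff, Set.mem_singleton_iff] at hp
  rcases hp with rfl | rfl | rfl
  · exact ⟨0, by simp⟩
  · obtain ⟨r, hr⟩ := hb
    exact ⟨r, by rw [← hr]; simp⟩
  · obtain ⟨r, hr⟩ := hc
    exact ⟨r, by rw [← hr]; simp⟩

lemma collinear_dest {a b c : E} (h : Collinear ℝ ({a, b, c} : Set E)) :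
    ∃ v : E, (∃ r : ℝ, b - a = r • v) ∧ (∃ r : ℝ, c - a = r • v) := by
  rw [collinear_iff_of_mem (Set.mem_insert a {b, c})] at h
  obtain ⟨v, hv⟩ := h
  refine ⟨v, ?_, ?_⟩
  · obtain ⟨r, hr⟩ := hv b (by simp)
    exact ⟨r, by rw [hr]; simp⟩
  · obtain ⟨r, hr⟩ := hv c (by simp)
    exact ⟨r, by rw [hr]; simp⟩

noncomputable def colF (a b c : E) : E :=
  ⟪b - a, b - a⟫ • (c - a) - ⟪c - a, b - a⟫ • (b - a)

lemma colF_eq_zero_iff {a b c : E} :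
    colF a b c = 0 ↔ Collinear ℝ ({a, b, c} : Set E) := by
  constructor
  · intro h
    by_cases hba : b = a
    · exact collinear_triple (v := c - a) ⟨0, by simp [hba]⟩ ⟨1, (one_smul ℝ _).symm⟩
    · have hip : ⟪b - a, b - a⟫ ≠ (0 : ℝ) := by
        rw [ne_eq, inner_self_eq_zero, sub_eq_zero]; exact hba
      rw [colF, sub_eq_zero] at h
      refine collinear_triple (v := b - a) ⟨1, (one_smul ℝ _).symm⟩
        ⟨⟪b - a, b - a⟫⁻¹ * ⟪c - a, b - a⟫, ?_⟩
      rw [mul_smul, ← h, inv_smul_smul₀ hip]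
  · intro h
    obtain ⟨v, ⟨rb, hrb⟩, ⟨rc, hrc⟩⟩ := collinear_dest h
    rw [colF, hrb, hrc, real_inner_smul_left, real_inner_smul_right,
      real_inner_smul_left, real_inner_smul_right]
    match_scalars <;> ring

lemma continuous_colF {X : Type*} [TopologicalSpace X] {f g h : X → E}
    (hf : Continuous f) (hg : Continuous g) (hh : Continuous h) :
    Continuous (fun x => colF (f x) (g x) (h x)) := by
  unfold colF
  have h1 : Continuous fun x => (⟪g x - f x, g x - f x⟫ : ℝ) :=
    Continuous.inner (hg.sub hf) (hg.sub hf)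
  have h2 : Continuous fun x => (⟪h x - f x, g x - f x⟫ : ℝ) :=
    Continuous.inner (hh.sub hf) (hg.sub hf)
  exact (h1.smul (hh.sub hf)).sub (h2.smul (hg.sub hf))

def chordSet (K : Set E) (O : E) : Set ℝ :=
  {d : ℝ | ∃ x ∈ K, ∃ y ∈ K, Collinear ℝ ({O, x, y} : Set E) ∧ d = dist x y}

lemma eFn_eq (K : Set E) (O : E) : eFn K O = sSup (chordSet K O) := rfl

lemma chordSet_eq (K : Set E) (O : E) :
    chordSet K O = (fun p : E × E => dist p.1 p.2) ''
      ((K ×ˢ K) ∩ {p : E × E | colF O p.1 p.2 = 0}) := by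
  ext d
  constructor
  · rintro ⟨x, hx, y, hy, hcol, rfl⟩
    exact ⟨(x, y), ⟨⟨hx, hy⟩, colF_eq_zero_iff.2 hcol⟩, rfl⟩
  · rintro ⟨⟨x, y⟩, ⟨⟨hx, hy⟩, hcol⟩, rfl⟩
    exact ⟨x, hx, y, hy, colF_eq_zero_iff.1 hcol, rfl⟩

lemma isCompact_chordSet {K : Set E} (hKc : IsCompact K) (O : E) :
    IsCompact (chordSet K O) := by
  rw [chordSet_eq]
  have hcont : Continuous fun p : E × E => colF O p.1 p.2 :=
    continuous_colF continuous_const continuous_fst continuous_snd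
  have hclosed : IsClosed {p : E × E | colF O p.1 p.2 = 0} :=
    isClosed_eq hcont continuous_const
  exact ((hKc.prod hKc).inter_right hclosed).image continuous_dist

lemma chordSet_nonempty {K : Set E} (hK : K.Nonempty) (O : E) :
    (chordSet K O).Nonempty := by
  obtain ⟨z, hz⟩ := hK
  exact ⟨0, z, hz, z, hz, colF_eq_zero_iff.1 (by simp [colF]), by simp⟩

lemma eFn_mem {K : Set E} (hKc : IsCompact K) (hK : K.Nonempty) (O : E) :
    eFn K O ∈ chordSet K O :=
  (isCompact_chordSet hKc O).sSup_mem (chordSet_nonempty hK O)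

lemma le_eFn {K : Set E} (hKc : IsCompact K) {O x y : E} (hx : x ∈ K) (hy : y ∈ K)
    (hcol : Collinear ℝ ({O, x, y} : Set E)) : dist x y ≤ eFn K O :=
  le_csSup (isCompact_chordSet hKc O).bddAbove ⟨x, hx, y, hy, hcol, rfl⟩

end Aux

section Aux2
open Topology
variable {n : ℕ}
local notation "E" => EuclideanSpace ℝ (Fin n)

lemma tendsto_colF {X : Type*} {l : Filter X} {f g h : X → E} {a b c : E}
    (hf : Filter.Tendsto f l (𝓝 a)) (hg : Filter.Tendsto g l (𝓝 b))
    (hh : Filter.Tendsto h l (𝓝 c)) :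
    Filter.Tendsto (fun x => colF (f x) (g x) (h x)) l (𝓝 (colF a b c)) := by
  unfold colF
  have h1 : Filter.Tendsto (fun x => (⟪g x - f x, g x - f x⟫ : ℝ)) l (𝓝 ⟪b - a, b - a⟫) :=
    Filter.Tendsto.inner (hg.sub hf) (hg.sub hf)
  have h2 : Filter.Tendsto (fun x => (⟪h x - f x, g x - f x⟫ : ℝ)) l (𝓝 ⟪c - a, b - a⟫) :=
    Filter.Tendsto.inner (hh.sub hf) (hg.sub hf)
  exact (h1.smul (hh.sub hf)).sub (h2.smul (hg.sub hf))

lemma deep_point {K : Set E} (hKconv : Convex ℝ K) {x z : E} {r μ : ℝ}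
    (hx : x ∈ K) (hz : ball z r ⊆ K) (hμ : 0 < μ) (hμ1 : μ ≤ 1) :
    ball ((1 - μ) • x + μ • z) (μ * r) ⊆ K := by
  intro w hw
  set p := (1 - μ) • x + μ • z with hp
  have hwp : ‖w - p‖ < μ * r := by
    rw [← dist_eq_norm]; exact mem_ball.1 hw
  have he : ‖μ⁻¹ • (w - p)‖ < r := by
    rw [norm_smul, norm_inv, Real.norm_eq_abs, abs_of_pos hμ]
    calc μ⁻¹ * ‖w - p‖ < μ⁻¹ * (μ * r) :=
          mul_lt_mul_of_pos_left hwp (inv_pos.2 hμ)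
      _ = r := by field_simp
  have hzK : z + μ⁻¹ • (w - p) ∈ K := by
    apply hz
    rw [mem_ball, dist_eq_norm]
    simpa using he
  have hw' : w = (1 - μ) • x + μ • (z + μ⁻¹ • (w - p)) := by
    rw [smul_add, smul_smul, mul_inv_cancel₀ hμ.ne', one_smul, hp]
    abel
  rw [hw']
  exact hKconv hx hzK (by linarith) hμ.le (by ring)

lemma eFn_ge_of_deep {K : Set E} (hKc : IsCompact K) {O O' p q : E} {ρ : ℝ}
    (hp : ball p ρ ⊆ K) (hq : ball q ρ ⊆ K)
    (hcol : Collinear ℝ ({O, p, q} : Set E)) (hO' : dist O' O < ρ) :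
    dist p q ≤ eFn K O' := by
  obtain ⟨v, ⟨rp, hrp⟩, ⟨rq, hrq⟩⟩ := collinear_dest hcol
  have hxK : p + (O' - O) ∈ K := by
    apply hp
    rw [mem_ball, dist_eq_norm]
    simpa [dist_eq_norm] using hO'
  have hyK : q + (O' - O) ∈ K := by
    apply hq
    rw [mem_ball, dist_eq_norm]
    simpa [dist_eq_norm] using hO'
  have hcol' : Collinear ℝ ({O', p + (O' - O), q + (O' - O)} : Set E) :=
    collinear_triple (v := v) ⟨rp, by rw [← hrp]; abel⟩ ⟨rq, by rw [← hrq]; abel⟩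
  calc dist p q = dist (p + (O' - O)) (q + (O' - O)) := (dist_add_right p q _).symm
    _ ≤ eFn K O' := le_eFn hKc hxK hyK hcol'

set_option maxHeartbeats 1000000 in
lemma eFn_usc {K : Set E} (hKc : IsCompact K) (hK : K.Nonempty) (O : E) {ε : ℝ}
    (hε : 0 < ε) : ∀ᶠ O' in 𝓝 O, eFn K O' < eFn K O + ε := by
  by_contra hcon
  rw [Filter.not_eventually] at hcon
  have hseq : ∀ k : ℕ, ∃ O', dist O' O < 1 / (k + 1) ∧ ¬ eFn K O' < eFn K O + ε := by
    intro k
    have hb : ∀ᶠ O' in 𝓝 O, dist O' O < 1 / (k + 1 : ℝ) := by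
      filter_upwards [Metric.ball_mem_nhds O (show (0:ℝ) < 1 / (k+1) by positivity)] with w hw
      exact mem_ball.1 hw
    obtain ⟨O', h1, h2⟩ := (hcon.and_eventually hb).exists
    exact ⟨O', h2, h1⟩
  choose Ok hOk1 hOk2 using hseq
  have hOk : Filter.Tendsto Ok atTop (𝓝 O) := by
    rw [tendsto_iff_dist_tendsto_zero]
    refine squeeze_zero (fun k => dist_nonneg) (fun k => (hOk1 k).le) ?_
    exact tendsto_one_div_add_atTop_nhds_zero_nat
  have hmax : ∀ k : ℕ, ∃ xy : (E) × (E), (xy ∈ K ×ˢ K) ∧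
      Collinear ℝ ({Ok k, xy.1, xy.2} : Set E) ∧ eFn K (Ok k) = dist xy.1 xy.2 := by
    intro k
    obtain ⟨x, hx, y, hy, hcol, hd⟩ := eFn_mem hKc hK (Ok k)
    exact ⟨(x, y), ⟨hx, hy⟩, hcol, hd⟩
  choose xy h1 h3 h4 using hmax
  obtain ⟨⟨x, y⟩, hmem, φ, hφ, hlim⟩ := (hKc.prod hKc).tendsto_subseq h1
  have hOkφ : Filter.Tendsto (fun k => Ok (φ k)) atTop (𝓝 O) := hOk.comp hφ.tendsto_atTop
  have hxlim : Filter.Tendsto (fun k => (xy (φ k)).1) atTop (𝓝 x) := hlim.fst_nhds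
  have hylim : Filter.Tendsto (fun k => (xy (φ k)).2) atTop (𝓝 y) := hlim.snd_nhds
  have hcolF : colF O x y = 0 := by
    have hc : Filter.Tendsto (fun k => colF (Ok (φ k)) (xy (φ k)).1 (xy (φ k)).2) atTop
        (𝓝 (colF O x y)) := tendsto_colF hOkφ hxlim hylim
    have hzero : (fun k => colF (Ok (φ k)) (xy (φ k)).1 (xy (φ k)).2) = fun _ => (0 : E) := by
      funext k
      exact colF_eq_zero_iff.2 (h3 (φ k))
    rw [hzero] at hc
    exact tendsto_nhds_unique hc tendsto_const_nhds
  have hcol : Collinear ℝ ({O, x, y} : Set E) := colF_eq_zero_iff.1 hcolF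
  have hle : dist x y ≤ eFn K O := le_eFn hKc hmem.1 hmem.2 hcol
  have hd : Filter.Tendsto (fun k => dist (xy (φ k)).1 (xy (φ k)).2) atTop
      (𝓝 (dist x y)) := hxlim.dist hylim
  have hge : eFn K O + ε ≤ dist x y := by
    refine ge_of_tendsto hd (Filter.Eventually.of_forall fun k => ?_)
    rw [← h4 (φ k)]
    exact not_lt.1 (hOk2 (φ k))
  linarith

end Aux2

section Aux3
open Topology
variable {n : ℕ}
local notation "E" => EuclideanSpace ℝ (Fin n)

lemma eFn_lsc_interior {K : Set E} (hKc : IsCompact K) (hKconv : Convex ℝ K) {O : E}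
    (hO : O ∈ interior K) {ε : ℝ} (hε : 0 < ε) :
    ∀ᶠ O' in 𝓝 O, eFn K O - ε ≤ eFn K O' := by
  obtain ⟨r, hr, hball⟩ := Metric.isOpen_iff.1 isOpen_interior O hO
  have hballK : ball O r ⊆ K := hball.trans interior_subset
  have hK : K.Nonempty := ⟨O, interior_subset hO⟩
  obtain ⟨x, hx, y, hy, hcol, hd⟩ := eFn_mem hKc hK O
  set D := dist x y with hD
  have hD0 : 0 ≤ D := dist_nonneg
  set μ : ℝ := min 1 (ε / (D + 1)) with hμdef
  have hμpos : 0 < μ := lt_min one_pos (by positivity)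
  have hμ1 : μ ≤ 1 := min_le_left _ _
  set p := (1 - μ) • x + μ • O with hpdef
  set q := (1 - μ) • y + μ • O with hqdef
  have hpdeep : ball p (μ * r) ⊆ K := deep_point hKconv hx hballK hμpos hμ1
  have hqdeep : ball q (μ * r) ⊆ K := deep_point hKconv hy hballK hμpos hμ1
  obtain ⟨v, ⟨rx, hrx⟩, ⟨ry, hry⟩⟩ := collinear_dest hcol
  have hpO : p - O = ((1 - μ) * rx) • v := by
    have h1 : p - O = (1 - μ) • (x - O) := by rw [hpdef]; module
    rw [h1, hrx, smul_smul]
  have hqO : q - O = ((1 - μ) * ry) • v := by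
    have h1 : q - O = (1 - μ) • (y - O) := by rw [hqdef]; module
    rw [h1, hry, smul_smul]
  have hcolpq : Collinear ℝ ({O, p, q} : Set E) :=
    collinear_triple ⟨_, hpO⟩ ⟨_, hqO⟩
  have hlen : dist p q = (1 - μ) * D := by
    have h1 : p - q = (1 - μ) • (x - y) := by rw [hpdef, hqdef]; module
    rw [dist_eq_norm, h1, norm_smul, Real.norm_eq_abs, abs_of_nonneg (by linarith : (0:ℝ) ≤ 1 - μ),
      hD, dist_eq_norm]
  have hμD : μ * D ≤ ε := by
    have h1 : μ ≤ ε / (D + 1) := min_le_right _ _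
    have h2 : μ * D ≤ (ε / (D + 1)) * D := mul_le_mul_of_nonneg_right h1 hD0
    have h3 : (ε / (D + 1)) * D ≤ ε := by
      rw [div_mul_eq_mul_div, div_le_iff₀ (by positivity)]
      nlinarith
    linarith
  filter_upwards [Metric.ball_mem_nhds O (mul_pos hμpos hr)] with O' hO'
  have hge : dist p q ≤ eFn K O' :=
    eFn_ge_of_deep hKc hpdeep hqdeep hcolpq (mem_ball.1 hO')
  nlinarith [hd]

lemma exterior_core {K : Set E} (hKc : IsCompact K) (hKconv : Convex ℝ K)
    {O x y z : E} {r s t : ℝ}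
    (hx : x ∈ K) (hy : y ∈ K) (hz : ball z r ⊆ K) (hr : 0 < r)
    (hs : 0 < s) (ht : 0 < t)
    (hsx : x - O = s • (y - x)) (hty : y - O = t • (y - x))
    {ε : ℝ} (hε : 0 < ε) :
    ∃ ρ > 0, ∃ p q : E, ball p ρ ⊆ K ∧ ball q ρ ⊆ K ∧
      Collinear ℝ ({O, p, q} : Set E) ∧ dist x y - ε ≤ dist p q := by
  have hzK : z ∈ K := hz (mem_ball_self hr)
  have hCx0 : (0:ℝ) ≤ ‖z - x‖ := norm_nonneg _
  have hCy0 : (0:ℝ) ≤ ‖z - y‖ := norm_nonneg _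
  set μ : ℝ := min (1/2) (min (ε / (2 * (‖z - x‖ + 1))) (ε * s / (4 * t * (‖z - y‖ + 1)))) with hμdef
  have hμpos : 0 < μ := by
    apply lt_min (by norm_num)
    exact lt_min (by positivity) (by positivity)
  have hμhalf : μ ≤ 1/2 := min_le_left _ _
  have hμ1 : μ ≤ 1 := by linarith
  set D : ℝ := (1 - μ) * s + μ * t with hDdef
  have hDpos : 0 < D := by rw [hDdef]; nlinarith
  have hD2 : s / 2 ≤ D := by rw [hDdef]; nlinarith
  set ν : ℝ := μ * t / D with hνdef
  have hνpos : 0 < ν := by rw [hνdef]; positivity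
  have hνD : ν * D = μ * t := by
    rw [hνdef]; exact div_mul_cancel₀ _ hDpos.ne'
  have hνDx : ν * ((1 - μ) * s + μ * t) = μ * t := by rw [← hDdef]; exact hνD
  have hν1 : ν ≤ 1 := by
    rw [hνdef, div_le_one hDpos, hDdef]
    nlinarith
  have hν2 : ν * s ≤ 2 * μ * t := by
    rw [hνdef, div_mul_eq_mul_div, div_le_iff₀ hDpos]
    have h2D : μ * t * s ≤ μ * t * (2 * D) := by
      apply mul_le_mul_of_nonneg_left _ (mul_pos hμpos ht).le
      linarith
    linarith
  have hb1 : μ * ‖z - x‖ ≤ ε / 2 := by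
    have h1 : μ ≤ ε / (2 * (‖z - x‖ + 1)) := (min_le_right _ _).trans (min_le_left _ _)
    have h2 : μ * ‖z - x‖ ≤ (ε / (2 * (‖z - x‖ + 1))) * ‖z - x‖ := mul_le_mul_of_nonneg_right h1 hCx0
    have h3 : (ε / (2 * (‖z - x‖ + 1))) * ‖z - x‖ ≤ ε / 2 := by
      rw [div_mul_eq_mul_div, div_le_div_iff₀ (by positivity) (by norm_num)]
      nlinarith
    linarith
  have hb2 : ν * ‖z - y‖ ≤ ε / 2 := by
    have h1 : μ ≤ ε * s / (4 * t * (‖z - y‖ + 1)) := (min_le_right _ _).trans (min_le_right _ _)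
    have h4 : μ * (4 * t * (‖z - y‖ + 1)) ≤ ε * s := (le_div_iff₀ (by positivity)).1 h1
    have h5 : ν * s * ‖z - y‖ ≤ 2 * μ * t * ‖z - y‖ := mul_le_mul_of_nonneg_right hν2 hCy0
    have h6 : ν * ‖z - y‖ * s ≤ ε / 2 * s := by
      have hμt : 0 ≤ μ * t := (mul_pos hμpos ht).le
      ring_nf at h4 h5 ⊢
      linarith
    exact le_of_mul_le_mul_right h6 hs
  set p := (1 - μ) • x + μ • z with hpdef
  set q := (1 - ν) • y + ν • z with hqdef
  have hpdeep : ball p (μ * r) ⊆ K := deep_point hKconv hx hz hμpos hμ1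
  have hqdeep : ball q (ν * r) ⊆ K := deep_point hKconv hy hz hνpos hν1
  refine ⟨min (μ * r) (ν * r), lt_min (by positivity) (by positivity), p, q, ?_, ?_, ?_, ?_⟩
  · exact (ball_subset_ball (min_le_left _ _)).trans hpdeep
  · exact (ball_subset_ball (min_le_right _ _)).trans hqdeep
  · have h1 : p - O = ((1 - μ) * s) • (y - x) + μ • (z - O) := by
      have h0 : p - O = (1 - μ) • (x - O) + μ • (z - O) := by rw [hpdef]; module
      rw [h0, hsx, smul_smul]
    have h2 : q - O = ((1 - ν) * t) • (y - x) + ν • (z - O) := by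
      have h0 : q - O = (1 - ν) • (y - O) + ν • (z - O) := by rw [hqdef]; module
      rw [h0, hty, smul_smul]
    have key : ν * ((1 - μ) * s) = μ * ((1 - ν) * t) := by linear_combination hνDx
    have hcoef1 : (ν / μ) * ((1 - μ) * s) = (1 - ν) * t := by
      rw [div_mul_eq_mul_div, div_eq_iff hμpos.ne']
      linear_combination key
    have hcoef2 : (ν / μ) * μ = ν := div_mul_cancel₀ ν hμpos.ne'
    have hqOp : q - O = (ν / μ) • (p - O) := by
      rw [h2, h1, smul_add, smul_smul, smul_smul, hcoef1, hcoef2]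
    exact collinear_triple (v := p - O) ⟨1, (one_smul ℝ _).symm⟩ ⟨ν / μ, hqOp⟩
  · have hxyeq : x - y = (p - q) - μ • (z - x) + ν • (z - y) := by
      rw [hpdef, hqdef]; module
    have hnorm : ‖x - y‖ ≤ ‖p - q‖ + μ * ‖z - x‖ + ν * ‖z - y‖ := by
      calc ‖x - y‖ = ‖(p - q) - μ • (z - x) + ν • (z - y)‖ := by rw [← hxyeq]
        _ ≤ ‖(p - q) - μ • (z - x)‖ + ‖ν • (z - y)‖ := norm_add_le _ _
        _ ≤ ‖p - q‖ + ‖μ • (z - x)‖ + ‖ν • (z - y)‖ := by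
            linarith [norm_sub_le (p - q) (μ • (z - x))]
        _ = ‖p - q‖ + μ * ‖z - x‖ + ν * ‖z - y‖ := by
            rw [norm_smul, norm_smul, Real.norm_eq_abs, Real.norm_eq_abs,
              abs_of_pos hμpos, abs_of_pos hνpos]
    rw [dist_eq_norm, dist_eq_norm]
    linarith
end Aux3

section Aux4
open Topology
variable {n : ℕ}
local notation "E" => EuclideanSpace ℝ (Fin n)

lemma eFn_lsc_exterior {K : Set E} (hKc : IsCompact K) (hKconv : Convex ℝ K)
    (hKint : (interior K).Nonempty) {O : E} (hO : O ∉ K) {ε : ℝ} (hε : 0 < ε) :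
    ∀ᶠ O' in 𝓝 O, eFn K O - ε ≤ eFn K O' := by
  obtain ⟨z, hz⟩ := hKint
  obtain ⟨r, hr, hball⟩ := Metric.isOpen_iff.1 isOpen_interior z hz
  have hballK : ball z r ⊆ K := hball.trans interior_subset
  have hzK : z ∈ K := interior_subset hz
  obtain ⟨x, hx, y, hy, hcol, hd⟩ := eFn_mem hKc ⟨z, hzK⟩ O
  have hzO : z - O ≠ 0 := sub_ne_zero.2 (fun h => hO (h ▸ hzK))
  have hnormzO : (0:ℝ) < ‖z - O‖ := norm_pos_iff.2 hzO
  set c : ℝ := r / (2 * ‖z - O‖) with hcdef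
  have hc : 0 < c := by rw [hcdef]; positivity
  have hz'K : z + c • (z - O) ∈ K := by
    apply hballK
    rw [mem_ball, dist_eq_norm]
    have h1 : z + c • (z - O) - z = c • (z - O) := by abel
    rw [h1, norm_smul, Real.norm_eq_abs, abs_of_pos hc, hcdef]
    rw [div_mul_eq_mul_div]
    rw [div_lt_iff₀ (by positivity)]
    nlinarith
  have hcol0 : Collinear ℝ ({O, z, z + c • (z - O)} : Set E) := by
    refine collinear_triple (v := z - O) ⟨1, (one_smul ℝ _).symm⟩ ⟨1 + c, ?_⟩
    module
  have hzz' : 0 < dist z (z + c • (z - O)) := by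
    rw [dist_pos]
    intro h
    have : c • (z - O) = 0 := by
      have := congrArg (fun w => w - z) h
      simpa using this.symm
    rcases smul_eq_zero.1 this with h' | h'
    · exact hc.ne' h'
    · exact hzO h'
  have hpos : 0 < eFn K O := lt_of_lt_of_le hzz' (le_eFn hKc hzK hz'K hcol0)
  have hxy : x ≠ y := by
    intro h
    rw [hd, h, dist_self] at hpos
    exact lt_irrefl _ hpos
  obtain ⟨v, ⟨rx, hrx⟩, ⟨ry, hry⟩⟩ := collinear_dest hcol
  set d : ℝ := ry - rx with hddef
  have hyx : y - x = d • v := by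
    have h1 : y - x = (y - O) - (x - O) := by abel
    rw [h1, hrx, hry, ← sub_smul, hddef]
  have hd0 : d ≠ 0 := by
    intro h0
    apply hxy
    have : y - x = 0 := by rw [hyx, h0, zero_smul]
    exact (sub_eq_zero.1 this).symm
  have hsx : x - O = (rx / d) • (y - x) := by
    rw [hyx, smul_smul, div_mul_cancel₀ _ hd0, hrx]
  have hty : y - O = (ry / d) • (y - x) := by
    rw [hyx, smul_smul, div_mul_cancel₀ _ hd0, hry]
  have ht0eq : ry / d = rx / d + 1 := by
    have h1 : ry = rx + d := by rw [hddef]; ring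
    rw [h1, add_div, div_self hd0]
  have hOK : ¬(-1 ≤ rx / d ∧ rx / d ≤ 0) := by
    rintro ⟨h1, h2⟩
    apply hO
    have hOeq : O = x - (rx / d) • (y - x) := by rw [← hsx]; abel
    have hOeq2 : O = (1 + rx / d) • x + (-(rx / d)) • y := by rw [hOeq]; module
    rw [hOeq2]
    exact hKconv hx hy (by linarith) (by linarith) (by ring)
  by_cases hs0 : 0 < rx / d
  · have ht0 : 0 < ry / d := by rw [ht0eq]; linarith
    obtain ⟨ρ, hρ, p, q, hp, hq, hcolpq, hlen⟩ :=
      exterior_core hKc hKconv hx hy hballK hr hs0 ht0 hsx hty hε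
    filter_upwards [Metric.ball_mem_nhds O hρ] with O' hO'
    have hge : dist p q ≤ eFn K O' := eFn_ge_of_deep hKc hp hq hcolpq (mem_ball.1 hO')
    rw [hd]
    linarith
  · have hlt : rx / d < -1 := by
      by_contra hge
      push_neg at hge
      exact hOK ⟨hge, le_of_not_gt hs0⟩
    have hs' : 0 < -(ry / d) := by rw [ht0eq]; linarith
    have ht' : 0 < -(rx / d) := by linarith
    have hsx' : y - O = (-(ry / d)) • (x - y) := by rw [hty]; module
    have hty' : x - O = (-(rx / d)) • (x - y) := by rw [hsx]; module
    obtain ⟨ρ, hρ, p, q, hp, hq, hcolpq, hlen⟩ :=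
      exterior_core hKc hKconv hy hx hballK hr hs' ht' hsx' hty' hε
    filter_upwards [Metric.ball_mem_nhds O hρ] with O' hO'
    have hge : dist p q ≤ eFn K O' := eFn_ge_of_deep hKc hp hq hcolpq (mem_ball.1 hO')
    rw [hd, dist_comm x y]
    linarith
end Aux4

theorem eFn_continuousAt_interior_and_compl {n : ℕ} (hn : 2 ≤ n)
    (K : Set (EuclideanSpace ℝ (Fin n)))
    (hKc : IsCompact K) (hKconv : Convex ℝ K) (hKint : (interior K).Nonempty) :
    (∀ O ∈ interior K, ContinuousAt (eFn K) O) ∧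
    (∀ O ∉ K, ContinuousAt (eFn K) O) := by
  obtain ⟨z0, hz0⟩ := hKint
  have hK : K.Nonempty := ⟨z0, interior_subset hz0⟩
  constructor
  · intro O hO
    show Filter.Tendsto (eFn K) (nhds O) (nhds (eFn K O))
    rw [Metric.tendsto_nhds]
    intro ε hε
    filter_upwards [eFn_usc hKc hK O (half_pos hε),
      eFn_lsc_interior hKc hKconv hO (half_pos hε)] with O' h1 h2
    rw [Real.dist_eq, abs_lt]
    constructor <;> linarith
  · intro O hO
    show Filter.Tendsto (eFn K) (nhds O) (nhds (eFn K O))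
    rw [Metric.tendsto_nhds]
    intro ε hε
    filter_upwards [eFn_usc hKc hK O (half_pos hε),
      eFn_lsc_exterior hKc hKconv ⟨z0, hz0⟩ hO (half_pos hε)] with O' h1 h2
    rw [Real.dist_eq, abs_lt]
    constructor <;> linarith
end

section
/- Let K ⊆ ℝⁿ be a convex body and O ∈ ∂K. The function e_K is continuous at O if and only if there exists O' ∈ ∂K with e_K(O) = |OO'|, i.e. some chord of K through O of maximal length has O as an endpoint. -/
open scoped RealInnerProductSpace
open Metric Filter

/-!
`e_K` is upper semicontinuous for every compact `K`: collinearity of `(P, x, y)` is a closed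
condition (equality in Cauchy–Schwarz), so by compactness of `K × K` the absence of chords of
length `≥ c` through `O` persists near `O`. Continuity at `O` is therefore lower semicontinuity.

If `e_K(O) = |OO'|`, approximate `O'` by an interior point `y`; for `P` near `O` the chord from `y`
through `P` passes through a point of `K` close to `P`, so its length is close to `|Oy|`.

Conversely, a line through a point `P ∉ K` meets the convex set `K` on one side of `P`, so
`e_K(P) ≤ |PO| + |Oz|` for a point `z ∈ K` farthest from `O`, which lies on `∂K`. Points outside `K`
accumulate at `O ∈ ∂K`, so lower semicontinuity at `O` forces `e_K(O) ≤ |Oz|`, the length of the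
chord `[Oz]`.
-/

open Topology AffineMap

section Geometry

variable {E F : Type*} [NormedAddCommGroup E] [NormedSpace ℝ E] [NormedAddCommGroup F]
  [InnerProductSpace ℝ F]

theorem collinear_iff_abs_inner_eq_norm_mul_norm (P x y : F) :
    Collinear ℝ ({P, x, y} : Set F) ↔ |⟪x - P, y - P⟫| = ‖x - P‖ * ‖y - P‖ := by
  have cauchy_schwarz_eq := (norm_inner_eq_norm_tfae ℝ (x - P) (y - P)).out 0 2
  rw [← Real.norm_eq_abs, cauchy_schwarz_eq]
  constructor
  · rw [collinear_iff_of_mem (Set.mem_insert P _)]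
    rintro ⟨v, hv⟩
    obtain ⟨s, rfl⟩ := hv x (by simp)
    obtain ⟨t, rfl⟩ := hv y (by simp)
    rcases eq_or_ne s 0 with rfl | hs
    · simp
    · refine Or.inr ⟨t / s, ?_⟩
      simp [smul_smul, div_mul_cancel₀ t hs]
  · rintro (hx | ⟨r, hr⟩)
    · rw [sub_eq_zero.mp hx, Set.insert_eq_of_mem (Set.mem_insert P _)]
      exact collinear_pair ℝ P y
    · have hy : y = lineMap P x r := by
        rw [lineMap_apply, vsub_eq_sub, vadd_eq_add, ← hr, sub_add_cancel]
      rw [Set.pair_comm, Set.insert_comm, hy]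
      exact collinear_insert_of_mem_affineSpan_pair (lineMap_mem_affineSpan_pair r P x)

theorem isClosed_setOf_collinear :
    IsClosed {p : F × F × F | Collinear ℝ ({p.1, p.2.1, p.2.2} : Set F)} := by
  simp only [collinear_iff_abs_inner_eq_norm_mul_norm]
  exact isClosed_eq (by fun_prop) (by fun_prop)

theorem Convex.dist_le_max_of_collinear_of_notMem {K : Set E} (hK : Convex ℝ K) {P x y : E}
    (hP : P ∉ K) (hx : x ∈ K) (hy : y ∈ K) (h : Collinear ℝ ({P, x, y} : Set E)) :
    dist x y ≤ max (dist P x) (dist P y) := by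
  rcases h.wbtw_or_wbtw_or_wbtw with h | h | h
  · have := h.dist_add_dist
    exact le_max_of_le_right (by linarith [dist_nonneg (x := P) (y := x)])
  · have := h.dist_add_dist
    rw [dist_comm P x]
    exact le_max_of_le_left (by linarith [dist_nonneg (x := y) (y := P)])
  · exact absurd (hK.segment_subset hy hx h.mem_segment) hP

theorem IsCompact.exists_mem_frontier_isMaxOn_dist {K : Set E} (hK : IsCompact K) {O : E}
    (hO : O ∈ frontier K) : ∃ z ∈ frontier K, IsMaxOn (dist O) K z := by
  obtain ⟨z, hzK, hz⟩ := hK.exists_isMaxOn (f := dist O) ⟨O, hK.isClosed.frontier_subset hO⟩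
    (by fun_prop)
  refine ⟨z, ?_, hz⟩
  rcases eq_or_ne z O with rfl | hzO
  · exact hO
  refine ⟨subset_closure hzK, fun hz_int => ?_⟩
  obtain ⟨ε, hε, hball⟩ := Metric.mem_nhds_iff.mp (mem_interior_iff_mem_nhds.mp hz_int)
  have hd : 0 < dist O z := dist_pos.mpr hzO.symm
  -- `w` lies on the ray from `O` through `z`, at distance `ε / 2` beyond `z`
  set w := lineMap O z (1 + ε / 2 / dist O z) with hw
  have hwK : w ∈ K := hball <| by
    rw [Metric.mem_ball, dist_lineMap_right, Real.norm_eq_abs, abs_sub_comm, add_sub_cancel_left,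
      abs_of_pos (by positivity), div_mul_cancel₀ _ hd.ne']
    linarith
  have hfar : dist O w = dist O z + ε / 2 := by
    rw [hw, dist_left_lineMap, Real.norm_eq_abs, abs_of_pos (by positivity), add_mul,
      div_mul_cancel₀ _ hd.ne', one_mul]
  linarith [show dist O w ≤ dist O z from hz hwK]

end Geometry

section Chords

variable {n : ℕ} {K : Set (EuclideanSpace ℝ (Fin n))}

theorem le_eFn_s13 (hK : Bornology.IsBounded K) {P x y : EuclideanSpace ℝ (Fin n)} (hx : x ∈ K)
    (hy : y ∈ K) (h : Collinear ℝ ({P, x, y} : Set (EuclideanSpace ℝ (Fin n)))) :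
    dist x y ≤ eFn K P := by
  refine le_csSup ⟨Metric.diam K, ?_⟩ ⟨x, hx, y, hy, h, rfl⟩
  rintro _ ⟨x, hx, y, hy, -, rfl⟩
  exact Metric.dist_le_diam_of_mem hK hx hy

theorem eFn_nonneg (K : Set (EuclideanSpace ℝ (Fin n))) (P : EuclideanSpace ℝ (Fin n)) :
    0 ≤ eFn K P :=
  Real.sSup_nonneg <| by rintro _ ⟨x, -, y, -, -, rfl⟩; exact dist_nonneg

theorem eFn_le (P : EuclideanSpace ℝ (Fin n)) {c : ℝ} (hc : 0 ≤ c)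
    (h : ∀ x ∈ K, ∀ y ∈ K, Collinear ℝ ({P, x, y} : Set (EuclideanSpace ℝ (Fin n))) →
      dist x y ≤ c) :
    eFn K P ≤ c :=
  Real.sSup_le (by rintro _ ⟨x, hx, y, hy, hcol, rfl⟩; exact h x hx y hy hcol) hc

theorem eFn_le_of_notMem (hK : Convex ℝ K) {P : EuclideanSpace ℝ (Fin n)} (hP : P ∉ K) {M : ℝ}
    (hM₀ : 0 ≤ M) (hM : ∀ z ∈ K, dist P z ≤ M) : eFn K P ≤ M :=
  eFn_le P hM₀ fun x hx y hy hcol =>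
    (hK.dist_le_max_of_collinear_of_notMem hP hx hy hcol).trans (max_le (hM x hx) (hM y hy))

theorem upperSemicontinuous_eFn (hK : IsCompact K) : UpperSemicontinuous (eFn K) := by
  intro O c hc
  obtain ⟨c', hOc', hc'c⟩ := exists_between hc
  have hclosed : IsClosed {q : EuclideanSpace ℝ (Fin n) × (EuclideanSpace ℝ (Fin n))
      × EuclideanSpace ℝ (Fin n) | Collinear ℝ ({q.1, q.2.1, q.2.2} : Set _) ∧
        c' ≤ dist q.2.1 q.2.2} :=
    isClosed_setOf_collinear.inter (isClosed_le continuous_const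
      (continuous_snd.fst.dist continuous_snd.snd))
  -- no long chord through `O`, hence, by compactness of `K × K`, none through nearby points
  have hshort : ∀ᶠ P in 𝓝 O, ∀ p ∈ K ×ˢ K,
      ¬(Collinear ℝ ({P, p.1, p.2} : Set _) ∧ c' ≤ dist p.1 p.2) := by
    refine (hK.prod hK).eventually_forall_of_forall_eventually fun p hp => ?_
    refine hclosed.isOpen_compl.mem_nhds fun ⟨hcol, hlong⟩ => ?_
    exact (hlong.trans (le_eFn_s13 hK.isBounded hp.1 hp.2 hcol)).not_gt hOc'
  filter_upwards [hshort] with P hP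
  calc eFn K P ≤ c' := eFn_le P ((eFn_nonneg K O).trans hOc'.le) fun x hx y hy hcol =>
        le_of_lt <| not_le.mp fun hlong => hP (x, y) ⟨hx, hy⟩ ⟨hcol, hlong⟩
    _ < c := hc'c

theorem eventually_lt_eFn_of_mem_interior (hKb : Bornology.IsBounded K) (hK : Convex ℝ K)
    {O y : EuclideanSpace ℝ (Fin n)} (hO : O ∈ closure K) (hy : y ∈ interior K) {c : ℝ}
    (hc : c < dist O y) : ∀ᶠ P in 𝓝 O, c < eFn K P := by
  obtain ⟨μ, hcμ, hμ₀, hμ₁⟩ : ∃ μ : ℝ, c < (1 - μ) * dist O y ∧ 0 < μ ∧ μ < 1 := by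
    have hlim : Tendsto (fun μ : ℝ => (1 - μ) * dist O y) (𝓝[>] 0) (𝓝 (dist O y)) :=
      tendsto_nhdsWithin_of_tendsto_nhds <|
        (by fun_prop : Continuous fun μ : ℝ => (1 - μ) * dist O y).tendsto' 0 _ (by simp)
    obtain ⟨μ, hcμ, hμ⟩ := ((hlim.eventually (lt_mem_nhds hc)).and (Ioo_mem_nhdsGT one_pos)).exists
    exact ⟨μ, hcμ, hμ⟩
  -- the chord from `y` through `P` contains `lineMap P y μ`, which stays in `K` as `P → O`
  have hinterior : ∀ᶠ P in 𝓝 O, lineMap P y μ ∈ interior K := by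
    have hmem : lineMap O y μ ∈ interior K := by
      rw [lineMap_apply_module]
      exact hK.combo_closure_interior_mem_interior hO hy (by linarith) hμ₀ (by ring)
    have hcont : Continuous fun P : EuclideanSpace ℝ (Fin n) => lineMap P y μ := by fun_prop
    exact hcont.continuousAt.eventually_mem (isOpen_interior.mem_nhds hmem)
  have hlong : ∀ᶠ P in 𝓝 O, c < (1 - μ) * dist P y :=
    continuousAt_const.eventually_lt (by fun_prop) hcμ
  filter_upwards [hinterior, hlong] with P hPK hPc
  calc c < (1 - μ) * dist P y := hPc
    _ = dist (lineMap P y μ) y := by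
      rw [dist_lineMap_right, Real.norm_of_nonneg (by linarith)]
    _ ≤ eFn K P := le_eFn_s13 hKb (interior_subset hPK) (interior_subset hy)
      (Wbtw.collinear ⟨μ, ⟨hμ₀.le, hμ₁.le⟩, rfl⟩)

theorem lowerSemicontinuousAt_eFn (hKb : Bornology.IsBounded K) (hK : Convex ℝ K)
    (hKint : (interior K).Nonempty) {O O' : EuclideanSpace ℝ (Fin n)} (hO : O ∈ closure K)
    (hO' : O' ∈ K) (h : eFn K O ≤ dist O O') : LowerSemicontinuousAt (eFn K) O := by
  intro c hc
  have hO'_closure : O' ∈ closure (interior K) := by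
    rw [hK.closure_interior_eq_closure_of_nonempty_interior hKint]
    exact subset_closure hO'
  obtain ⟨y, hy, hcy⟩ : ∃ y ∈ interior K, c < dist O y :=
    ((mem_closure_iff_frequently.mp hO'_closure).and_eventually
      (continuousAt_const.eventually_lt (g := dist O) (by fun_prop) (hc.trans_le h))).exists
  exact eventually_lt_eFn_of_mem_interior hKb hK hO hy hcy

theorem eFn_le_of_lowerSemicontinuousAt (hK : Convex ℝ K) {O : EuclideanSpace ℝ (Fin n)}
    (hO : O ∈ frontier K) {M : ℝ} (hM : ∀ z ∈ K, dist O z ≤ M)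
    (h : LowerSemicontinuousAt (eFn K) O) : eFn K O ≤ M := by
  by_contra! hMO
  obtain ⟨z, hz⟩ := closure_nonempty_iff.mp ⟨O, frontier_subset_closure hO⟩
  have hM₀ : 0 ≤ M := dist_nonneg.trans (hM z hz)
  obtain ⟨m, hMm, hmO⟩ := exists_between hMO
  have hexterior : ∃ᶠ P in 𝓝 O, P ∉ K :=
    Filter.not_eventually.mp fun hK_nhds => hO.2 (mem_interior_iff_mem_nhds.mpr hK_nhds)
  obtain ⟨P, hPK, hPlarge, hPO⟩ := (hexterior.and_eventually
    ((h m hmO).and (Metric.ball_mem_nhds O (sub_pos.mpr hMm)))).exists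
  have hPsmall : eFn K P ≤ dist P O + M :=
    eFn_le_of_notMem hK hPK (add_nonneg dist_nonneg hM₀) fun z hz => by
      linarith [dist_triangle P O z, hM z hz]
  linarith [Metric.mem_ball.mp hPO]

end Chords

theorem eFn_continuousAt_boundary_iff_general {n : ℕ}
    (K : Set (EuclideanSpace ℝ (Fin n)))
    (hKc : IsCompact K) (hKconv : Convex ℝ K) (hKint : (interior K).Nonempty)
    (O : EuclideanSpace ℝ (Fin n)) (hO : O ∈ frontier K) :
    ContinuousAt (eFn K) O ↔ ∃ O' ∈ frontier K, eFn K O = dist O O' := by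
  have hOK : O ∈ K := hKc.isClosed.frontier_subset hO
  rw [continuousAt_iff_lower_upperSemicontinuousAt]
  constructor
  · rintro ⟨hlsc, -⟩
    obtain ⟨z, hz, hzmax⟩ := hKc.exists_mem_frontier_isMaxOn_dist hO
    refine ⟨z, hz, le_antisymm (eFn_le_of_lowerSemicontinuousAt hKconv hO hzmax hlsc) ?_⟩
    exact le_eFn_s13 hKc.isBounded hOK (hKc.isClosed.frontier_subset hz) (by simp [collinear_pair])
  · rintro ⟨O', hO', hOO'⟩
    exact ⟨lowerSemicontinuousAt_eFn hKc.isBounded hKconv hKint (subset_closure hOK)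
      (hKc.isClosed.frontier_subset hO') hOO'.le, upperSemicontinuous_eFn hKc O⟩

theorem eFn_continuousAt_boundary_iff {n : ℕ} (hn : 2 ≤ n)
    (K : Set (EuclideanSpace ℝ (Fin n)))
    (hKc : IsCompact K) (hKconv : Convex ℝ K) (hKint : (interior K).Nonempty)
    (O : EuclideanSpace ℝ (Fin n)) (hO : O ∈ frontier K) :
    ContinuousAt (eFn K) O ↔ ∃ O' ∈ frontier K, eFn K O = dist O O' :=
  eFn_continuousAt_boundary_iff_general K hKc hKconv hKint O hO
end
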